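/- arXiv:2006.15747 — 7 statements merged into one kernel-verified Lean document; each statement's English description precedes it below -/
import Mathlib

section
/- Let u be bi-valued utilities with all values α_i, β_i rational and each agent i valuing at least one item at α_i. Then each agent gets the same utility in all HZ solutions of the instance, that common utility is a rational number for each agent, and there exists an HZ solution all of whose entries are rational. -/
open Finset

/-- A fractional assignment: entries in `[0,1]`, each column sums to 1. -/
def IsFracAssign (n : ℕ) (x : Fin n → Fin n → ℝ) : Prop :=
  (∀ i j, 0 ≤ x i j ∧ x i j ≤ 1) ∧ ∀ j, ∑ i, x i j = 1

/-- A fractional assignment is balanced if each row sums to 1. -/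
def IsBalanced (n : ℕ) (x : Fin n → Fin n → ℝ) : Prop :=
  ∀ i, ∑ j, x i j = 1

/-- An allocation: a vector in `[0,1]^n`. -/
def IsAlloc (n : ℕ) (y : Fin n → ℝ) : Prop :=
  ∀ j, 0 ≤ y j ∧ y j ≤ 1

/-- A balanced allocation: an allocation whose entries sum to 1. -/
def IsBalancedAlloc (n : ℕ) (y : Fin n → ℝ) : Prop :=
  IsAlloc n y ∧ ∑ j, y j = 1

/-- Agent `i`'s utility for the allocation `y` under utility matrix `u`. -/
def util (n : ℕ) (u : Fin n → Fin n → ℝ) (i : Fin n) (y : Fin n → ℝ) : ℝ :=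
  ∑ j, u i j * y j

/-- `x` is an HZ solution supported by the price vector `p`:
`x` is a balanced fractional assignment and, for every agent `i`,
(a) the row `x i` maximizes `i`'s utility over all balanced allocations within budget 1, and
(b) `x i` is a cheapest balanced allocation achieving at least that utility. -/
def IsHZWithPrices (n : ℕ) (u x : Fin n → Fin n → ℝ) (p : Fin n → ℝ) : Prop :=
  IsFracAssign n x ∧ IsBalanced n x ∧ (∀ j, 0 ≤ p j) ∧
  ∀ i : Fin n,
    (∑ j, p j * x i j ≤ 1) ∧
    (∀ y, IsBalancedAlloc n y → ∑ j, p j * y j ≤ 1 → util n u i y ≤ util n u i (x i)) ∧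
    (∀ y, IsBalancedAlloc n y → util n u i (x i) ≤ util n u i y →
      ∑ j, p j * x i j ≤ ∑ j, p j * y j)

/-- `x` is an HZ solution: some nonnegative price vector supports it. -/
def IsHZ (n : ℕ) (u x : Fin n → Fin n → ℝ) : Prop :=
  ∃ p : Fin n → ℝ, IsHZWithPrices n u x p

/-- Utilities `u` are bi-valued with values `α i > β i ≥ 0` for each agent `i`. -/
def BiValued (n : ℕ) (u : Fin n → Fin n → ℝ) (α β : Fin n → ℝ) : Prop :=
  ∀ i, 0 ≤ β i ∧ β i < α i ∧ ∀ j, u i j = α i ∨ u i j = β i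

section Unique

attribute [local instance] Classical.propDecidable

variable {n : ℕ} {u : Fin n → Fin n → ℝ} {αr βr : Fin n → ℝ}

/-- the set of items agent `i` values at the high value. -/
noncomputable def Aset (n : ℕ) (u : Fin n → Fin n → ℝ) (αr : Fin n → ℝ) (i : Fin n) :
    Finset (Fin n) :=
  univ.filter (fun j => u i j = αr i)

lemma mem_Aset {i j : Fin n} : j ∈ Aset n u αr i ↔ u i j = αr i := by
  simp [Aset]

lemma not_mem_Aset (hbi : BiValued n u αr βr) {i j : Fin n} (h : j ∉ Aset n u αr i) :
    u i j = βr i := by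
  rcases (hbi i).2.2 j with h' | h'
  · exact absurd (mem_Aset.mpr h') h
  · exact h'

lemma util_eq_aff (hbi : BiValued n u αr βr) (i : Fin n) (y : Fin n → ℝ)
    (hy : ∑ j, y j = 1) :
    util n u i y = βr i + (αr i - βr i) * ∑ j ∈ Aset n u αr i, y j := by
  have key : ∀ j, u i j * y j
      = βr i * y j + (if j ∈ Aset n u αr i then (αr i - βr i) * y j else 0) := by
    intro j
    by_cases h : j ∈ Aset n u αr i
    · rw [if_pos h, mem_Aset.mp h]; ring
    · rw [if_neg h, not_mem_Aset hbi h]; ring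
  unfold util
  rw [Finset.sum_congr rfl (fun j _ => key j), Finset.sum_add_distrib, ← Finset.mul_sum, hy,
    Finset.sum_ite_mem, Finset.univ_inter, Finset.mul_sum, mul_one]

/-- the perturbed allocation moving `ε` mass from `j'` to `j`. -/
lemma exchange_alloc {x : Fin n → ℝ} (hx : IsBalancedAlloc n x) {j j' : Fin n} (hne : j ≠ j')
    {ε : ℝ} (hε : 0 < ε) (h1 : ε ≤ 1 - x j) (h2 : ε ≤ x j') :
    IsBalancedAlloc n (fun t => x t + (if t = j then ε else 0) - (if t = j' then ε else 0)) := by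
  constructor
  · intro t
    have h0 := hx.1 t
    dsimp only
    by_cases hj : t = j
    · subst hj
      rw [if_pos rfl, if_neg hne]
      constructor <;> linarith [h0.1, h0.2]
    · rw [if_neg hj]
      by_cases hj' : t = j'
      · subst hj'
        rw [if_pos rfl]
        constructor <;> linarith [h0.1, h0.2]
      · rw [if_neg hj']
        constructor <;> linarith [h0.1, h0.2]
  · rw [Finset.sum_sub_distrib, Finset.sum_add_distrib]
    simp only [Finset.sum_ite_eq', Finset.mem_univ, if_pos]
    rw [hx.2]; ring

lemma sum_exchange (c x : Fin n → ℝ) {j j' : Fin n} (hne : j ≠ j') (ε : ℝ) :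
    ∑ t, c t * (x t + (if t = j then ε else 0) - (if t = j' then ε else 0))
      = (∑ t, c t * x t) + ε * c j - ε * c j' := by
  have key : ∀ t, c t * (x t + (if t = j then ε else 0) - (if t = j' then ε else 0))
      = c t * x t + (if t = j then ε * c t else 0) - (if t = j' then ε * c t else 0) := by
    intro t
    by_cases hj : t = j
    · subst hj
      rw [if_pos rfl, if_pos rfl, if_neg hne, if_neg hne]
      ring
    · rw [if_neg hj, if_neg hj]
      by_cases hj' : t = j'
      · subst hj'
        rw [if_pos rfl, if_pos rfl]
        ring
      · rw [if_neg hj', if_neg hj']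
        ring
  rw [Finset.sum_congr rfl (fun t _ => key t), Finset.sum_sub_distrib, Finset.sum_add_distrib]
  simp only [Finset.sum_ite_eq', Finset.mem_univ, if_pos]

/-- E1: a held item is at most as expensive as any weakly better item. -/
lemma hz_price_le {x : Fin n → Fin n → ℝ} {p : Fin n → ℝ} (hz : IsHZWithPrices n u x p)
    {i : Fin n} {j j' : Fin n} (hx : 0 < x i j') (hu : u i j' ≤ u i j) : p j' ≤ p j := by
  by_cases hne : j = j'
  · subst hne; exact le_refl _
  have hle1 : x i j ≤ 1 := (hz.1.1 i j).2
  rcases lt_or_eq_of_le hle1 with hlt | heq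
  · set ε := min (1 - x i j) (x i j') with hε
    have hεpos : 0 < ε := lt_min (by linarith) hx
    have hy := exchange_alloc (n := n) ⟨fun t => hz.1.1 i t, hz.2.1 i⟩ hne hεpos
      (min_le_left _ _) (min_le_right _ _)
    set y := fun t => x i t + (if t = j then ε else 0) - (if t = j' then ε else 0) with hydef
    have hutil : util n u i (x i) ≤ util n u i y := by
      unfold util
      rw [hydef, sum_exchange (u i) (x i) hne ε]
      nlinarith [hεpos]
    have := (hz.2.2.2 i).2.2 y hy hutil
    rw [hydef, sum_exchange p (x i) hne ε] at this
    nlinarith [hεpos]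
  · -- x i j = 1 forces x i j' = 0
    exfalso
    have hrow := hz.2.1 i
    have : ∑ t ∈ univ.erase j, x i t = 0 := by
      have := Finset.add_sum_erase univ (x i) (Finset.mem_univ j)
      rw [hrow] at this
      linarith [heq]
    have hzero : x i j' = 0 := by
      have hmem : j' ∈ univ.erase j := Finset.mem_erase.mpr ⟨fun h => hne h.symm, Finset.mem_univ _⟩
      have := (Finset.sum_eq_zero_iff_of_nonneg (fun t _ => (hz.1.1 i t).1)).mp this j' hmem
      exact this
    linarith

end Unique

section Cert

attribute [local instance] Classical.propDecidable

variable {n : ℕ} {u : Fin n → Fin n → ℝ} {αr βr : Fin n → ℝ}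

lemma hz_cert (hbi : BiValued n u αr βr) (htop : ∀ i, ∃ j, u i j = αr i)
    {x : Fin n → Fin n → ℝ} {p : Fin n → ℝ} (hz : IsHZWithPrices n u x p) :
    (∀ S : Finset (Fin n), ∑ k ∈ S, (∑ j ∈ Aset n u αr k, x k j)
        ≤ (((S.biUnion (Aset n u αr)).card : ℝ))) ∧
    (∀ i, (∑ j ∈ Aset n u αr i, x i j) < 1 →
      ∃ S : Finset (Fin n), i ∈ S ∧
        (∀ k ∈ S, (∑ j ∈ Aset n u αr k, x k j) ≤ ∑ j ∈ Aset n u αr i, x i j) ∧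
        (∑ k ∈ S, ∑ j ∈ Aset n u αr k, x k j) = ((S.biUnion (Aset n u αr)).card : ℝ)) := by
  set A := Aset n u αr with hA
  set a : Fin n → ℝ := fun k => ∑ j ∈ A k, x k j with ha
  have hxnn : ∀ k j, 0 ≤ x k j := fun k j => (hz.1.1 k j).1
  have hrow : ∀ k, ∑ j, x k j = 1 := hz.2.1
  have hcol : ∀ j, ∑ k, x k j = 1 := hz.1.2
  have hpnn : ∀ j, 0 ≤ p j := hz.2.2.1
  -- U1
  have hU1 : ∀ S : Finset (Fin n), ∑ k ∈ S, a k ≤ ((S.biUnion A).card : ℝ) := by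
    intro S
    have h1 : ∀ k ∈ S, a k ≤ ∑ j ∈ S.biUnion A, x k j := by
      intro k hk
      exact Finset.sum_le_sum_of_subset_of_nonneg (Finset.subset_biUnion_of_mem A hk)
        (fun j _ _ => hxnn k j)
    calc ∑ k ∈ S, a k ≤ ∑ k ∈ S, ∑ j ∈ S.biUnion A, x k j := Finset.sum_le_sum h1
      _ = ∑ j ∈ S.biUnion A, ∑ k ∈ S, x k j := Finset.sum_comm
      _ ≤ ∑ j ∈ S.biUnion A, 1 := by
          refine Finset.sum_le_sum fun j _ => ?_
          calc ∑ k ∈ S, x k j ≤ ∑ k, x k j :=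
                Finset.sum_le_sum_of_subset_of_nonneg (Finset.subset_univ S)
                  (fun k _ _ => hxnn k j)
            _ = 1 := hcol j
      _ = ((S.biUnion A).card : ℝ) := by rw [Finset.sum_const, nsmul_eq_mul, mul_one]
  refine ⟨hU1, ?_⟩
  intro i hai
  have hAne : ∀ k, (A k).Nonempty := by
    intro k
    obtain ⟨j, hj⟩ := htop k
    exact ⟨j, mem_Aset.mpr hj⟩
  have hn : (univ : Finset (Fin n)).Nonempty := ⟨i, Finset.mem_univ i⟩
  set p0 := univ.inf' hn p with hp0
  set m : Fin n → ℝ := fun k => (A k).inf' (hAne k) p with hm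
  obtain ⟨j0, _, hj0⟩ := Finset.exists_mem_eq_inf' hn p
  have hp0le : ∀ j, p0 ≤ p j := fun j => Finset.inf'_le p (Finset.mem_univ j)
  have hmle : ∀ k, ∀ j ∈ A k, m k ≤ p j := fun k j hj => Finset.inf'_le p hj
  have hp0m : ∀ k, p0 ≤ m k := by
    intro k
    obtain ⟨j, hj, hjeq⟩ := Finset.exists_mem_eq_inf' (hAne k) p
    rw [hm]; dsimp only; rw [hjeq]; exact hp0le j
  -- jm k : cheapest item in A k
  have hjm : ∀ k, ∃ j ∈ A k, p j = m k := by
    intro k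
    obtain ⟨j, hj, hjeq⟩ := Finset.exists_mem_eq_inf' (hAne k) p
    exact ⟨j, hj, hjeq.symm⟩
  -- f1 : prices of held items
  have hf1A : ∀ k j', 0 < x k j' → j' ∈ A k → p j' = m k := by
    intro k j' hx hj'
    obtain ⟨jm, hjmA, hjmp⟩ := hjm k
    have hu : u k j' ≤ u k jm := by
      rw [mem_Aset.mp hj', mem_Aset.mp hjmA]
    have := hz_price_le hz hx hu
    rw [hjmp] at this
    exact le_antisymm this (hmle k j' hj')
  have hf1B : ∀ k j', 0 < x k j' → j' ∉ A k → p j' = p0 := by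
    intro k j' hx hj'
    have hu : u k j' ≤ u k j0 := by
      rw [not_mem_Aset hbi hj']
      rcases (hbi k).2.2 j0 with h | h
      · rw [h]; exact le_of_lt (hbi k).2.1
      · rw [h]
    have := hz_price_le hz hx hu
    rw [← hj0] at this
    exact le_antisymm this (hp0le j')
  -- a k ≤ 1
  have halle : ∀ k, a k ≤ 1 := by
    intro k
    rw [ha]; dsimp only
    rw [← hrow k]
    exact Finset.sum_le_sum_of_subset_of_nonneg (Finset.subset_univ _) (fun j _ _ => hxnn k j)
  -- f2 : cost decomposition
  have hf2 : ∀ k, ∑ j, p j * x k j = m k * a k + p0 * (1 - a k) := by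
    intro k
    have hsplit : ∑ j, p j * x k j = ∑ j ∈ A k, p j * x k j + ∑ j ∈ (A k)ᶜ, p j * x k j :=
      (Finset.sum_add_sum_compl (A k) _).symm
    have h1 : ∑ j ∈ A k, p j * x k j = m k * a k := by
      rw [ha]; dsimp only; rw [Finset.mul_sum]
      refine Finset.sum_congr rfl fun j hj => ?_
      rcases eq_or_lt_of_le (hxnn k j) with h | h
      · rw [← h, mul_zero, mul_zero]
      · rw [hf1A k j h hj]
    have h2 : ∑ j ∈ (A k)ᶜ, p j * x k j = p0 * (1 - a k) := by
      have hcompl : ∑ j ∈ (A k)ᶜ, x k j = 1 - a k := by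
        have := Finset.sum_add_sum_compl (A k) (x k)
        rw [hrow k] at this
        rw [ha]; dsimp only; linarith
      rw [← hcompl, Finset.mul_sum]
      refine Finset.sum_congr rfl fun j hj => ?_
      rcases eq_or_lt_of_le (hxnn k j) with h | h
      · rw [← h, mul_zero, mul_zero]
      · rw [hf1B k j h (Finset.mem_compl.mp hj)]
    rw [hsplit, h1, h2]
  -- f3 : for unsaturated agents the budget binds and m k > p0
  have hf3 : ∀ k, a k < 1 → ∑ j, p j * x k j = 1 ∧ p0 < m k := by
    intro k hk
    obtain ⟨jm, hjmA, hjmp⟩ := hjm k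
    have hxjm : x k jm < 1 := by
      by_contra h
      push_neg at h
      have : (1:ℝ) ≤ a k := le_trans h
        (Finset.single_le_sum (fun j _ => hxnn k j) hjmA)
      linarith
    have hj' : ∃ j' ∈ (A k)ᶜ, 0 < x k j' := by
      by_contra h
      push_neg at h
      have hz0 : ∑ j ∈ (A k)ᶜ, x k j ≤ 0 := Finset.sum_nonpos fun j hj => h j hj
      have := Finset.sum_add_sum_compl (A k) (x k)
      rw [hrow k] at this
      have : (1:ℝ) ≤ a k := by rw [ha]; dsimp only; linarith
      linarith
    obtain ⟨j', hj'c, hxj'⟩ := hj'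
    have hne : jm ≠ j' := by
      intro h
      exact (Finset.mem_compl.mp hj'c) (h ▸ hjmA)
    have hcost_le := (hz.2.2.2 k).1
    have hcost1 : ∑ j, p j * x k j = 1 := by
      by_contra hc
      have hclt : ∑ j, p j * x k j < 1 := lt_of_le_of_ne hcost_le hc
      set C := ∑ j, p j * x k j with hC
      set ε := min (min (1 - x k jm) (x k j')) ((1 - C)/(p jm + 1)) with hε
      have hεpos : 0 < ε := by
        refine lt_min (lt_min (by linarith) hxj') ?_
        have h2 : 0 < p jm + 1 := by linarith [hpnn jm]
        exact div_pos (by linarith) h2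
      have hy := exchange_alloc (n := n) ⟨fun t => hz.1.1 k t, hrow k⟩ hne hεpos
        (le_trans (min_le_left _ _) (min_le_left _ _))
        (le_trans (min_le_left _ _) (min_le_right _ _))
      set y := fun t => x k t + (if t = jm then ε else 0) - (if t = j' then ε else 0) with hydef
      have hcosty : ∑ j, p j * y j ≤ 1 := by
        rw [hydef, sum_exchange p (x k) hne ε]
        have h1 : ε ≤ (1 - C)/(p jm + 1) := min_le_right _ _
        have h2 : 0 < p jm + 1 := by linarith [hpnn jm]
        have h3 : ε * (p jm + 1) ≤ 1 - C := by
          rw [← div_mul_cancel₀ (1 - C) (ne_of_gt h2)]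
          exact mul_le_mul_of_nonneg_right h1 (le_of_lt h2)
        nlinarith [hpnn j', hεpos]
      have hutil := (hz.2.2.2 k).2.1 y hy hcosty
      have hugt : util n u k (x k) < util n u k y := by
        unfold util
        rw [hydef, sum_exchange (u k) (x k) hne ε]
        have h1 : u k jm = αr k := mem_Aset.mp hjmA
        have h2 : u k j' = βr k := not_mem_Aset hbi (Finset.mem_compl.mp hj'c)
        rw [h1, h2]
        nlinarith [(hbi k).2.1, hεpos]
      linarith
    refine ⟨hcost1, ?_⟩
    by_contra hcon
    push_neg at hcon
    have hmeq : m k = p0 := le_antisymm hcon (hp0m k)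
    set ε := min (1 - x k jm) (x k j') with hε
    have hεpos : 0 < ε := lt_min (by linarith) hxj'
    have hy := exchange_alloc (n := n) ⟨fun t => hz.1.1 k t, hrow k⟩ hne hεpos
      (min_le_left _ _) (min_le_right _ _)
    set y := fun t => x k t + (if t = jm then ε else 0) - (if t = j' then ε else 0) with hydef
    have hpj' : p j' = p0 := hf1B k j' hxj' (Finset.mem_compl.mp hj'c)
    have hcosty : ∑ j, p j * y j ≤ 1 := by
      rw [hydef, sum_exchange p (x k) hne ε, hjmp, hmeq, hpj', hcost1]
      linarith
    have hutil := (hz.2.2.2 k).2.1 y hy hcosty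
    have hugt : util n u k (x k) < util n u k y := by
      unfold util
      rw [hydef, sum_exchange (u k) (x k) hne ε]
      have h1 : u k jm = αr k := mem_Aset.mp hjmA
      have h2 : u k j' = βr k := not_mem_Aset hbi (Finset.mem_compl.mp hj'c)
      rw [h1, h2]
      nlinarith [(hbi k).2.1, hεpos]
    linarith
  -- f4 : p0 < 1
  have hf4 : p0 < 1 := by
    by_contra h
    push_neg at h
    have hcostk : ∀ k, p0 ≤ ∑ j, p j * x k j := by
      intro k
      calc p0 = p0 * 1 := (mul_one p0).symm
        _ = p0 * ∑ j, x k j := by rw [hrow k]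
        _ = ∑ j, p0 * x k j := by rw [Finset.mul_sum]
        _ ≤ ∑ j, p j * x k j :=
            Finset.sum_le_sum fun j _ => mul_le_mul_of_nonneg_right (hp0le j) (hxnn k j)
    have hsum : ∑ j, p j = ∑ k, ∑ j, p j * x k j := by
      rw [Finset.sum_comm]
      refine Finset.sum_congr rfl fun j _ => ?_
      rw [← Finset.mul_sum, hcol j, mul_one]
    have hsumle : ∑ j, p j ≤ (n : ℝ) := by
      rw [hsum]
      calc ∑ k, ∑ j, p j * x k j ≤ ∑ _k : Fin n, (1:ℝ) :=
            Finset.sum_le_sum fun k _ => (hz.2.2.2 k).1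
        _ = n := by rw [Finset.sum_const, nsmul_eq_mul, mul_one, Finset.card_univ,
              Fintype.card_fin]
    have hallone : ∀ j, p j = 1 := by
      by_contra hcon
      push_neg at hcon
      obtain ⟨j1, hj1⟩ := hcon
      have hj1' : 1 < p j1 := lt_of_le_of_ne (le_trans h (hp0le j1)) (Ne.symm hj1)
      have : (n : ℝ) < ∑ j, p j := by
        calc (n : ℝ) = ∑ _j : Fin n, (1:ℝ) := by
              rw [Finset.sum_const, nsmul_eq_mul, mul_one, Finset.card_univ, Fintype.card_fin]
          _ < ∑ j, p j :=
              Finset.sum_lt_sum (fun j _ => le_trans h (hp0le j)) ⟨j1, Finset.mem_univ j1, hj1'⟩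
      linarith
    have := (hf3 i hai).2
    obtain ⟨jm, hjmA, hjmp⟩ := hjm i
    rw [← hjmp, hallone jm] at this
    have := hp0le j0
    rw [← hj0] at *
    linarith [hallone j0]
  -- f5 : the value equation
  have hf5 : ∀ k, a k < 1 → a k * (m k - p0) = 1 - p0 := by
    intro k hk
    have h1 := (hf3 k hk).1
    have h2 := hf2 k
    rw [h1] at h2
    linarith [h2]
  have hmi1 : 1 < m i := by
    have h1 := hf5 i hai
    have h2 := (hf3 i hai).2
    nlinarith
  -- the certificate set
  set S := univ.filter (fun k => m i ≤ m k) with hS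
  set T := univ.filter (fun j => m i ≤ p j) with hT
  have hiS : i ∈ S := Finset.mem_filter.mpr ⟨Finset.mem_univ i, le_refl _⟩
  -- g1
  have hg1 : ∀ k ∈ S, a k ≤ a i := by
    intro k hk
    have hmk : m i ≤ m k := (Finset.mem_filter.mp hk).2
    have hak : a k < 1 := by
      rcases lt_or_eq_of_le (halle k) with h | h
      · exact h
      · exfalso
        have hcost := hf2 k
        rw [h] at hcost
        have : ∑ j, p j * x k j = m k := by rw [hcost]; ring
        have hb := (hz.2.2.2 k).1
        rw [this] at hb
        linarith
    have h1 := hf5 k hak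
    have h2 := hf5 i hai
    have hak0 : 0 < a k := by nlinarith [hp0m k]
    nlinarith
  -- g2
  have hg2 : S.biUnion A ⊆ T := by
    intro j hj
    obtain ⟨k, hk, hjk⟩ := Finset.mem_biUnion.mp hj
    refine Finset.mem_filter.mpr ⟨Finset.mem_univ j, ?_⟩
    exact le_trans (Finset.mem_filter.mp hk).2 (hmle k j hjk)
  -- g3
  have hg3 : (T.card : ℝ) ≤ ∑ k ∈ S, a k := by
    have hTc : (T.card : ℝ) = ∑ j ∈ T, ∑ k, x k j := by
      rw [Finset.sum_congr rfl fun j _ => hcol j, Finset.sum_const, nsmul_eq_mul, mul_one]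
    have hkey : ∀ k, ∑ j ∈ T, x k j ≤ if k ∈ S then a k else 0 := by
      intro k
      have hzero : ∀ j ∈ T, j ∉ A k → x k j = 0 := by
        intro j hjT hjA
        rcases eq_or_lt_of_le (hxnn k j) with h | h
        · exact h.symm
        · exfalso
          have := hf1B k j h hjA
          have hjT' := (Finset.mem_filter.mp hjT).2
          rw [this] at hjT'
          linarith
      by_cases hk : k ∈ S
      · rw [if_pos hk]
        have := Finset.sum_inter_add_sum_sdiff T (A k) (x k)
        have hdiff : ∑ j ∈ T \ A k, x k j = 0 :=
          Finset.sum_eq_zero fun j hj => hzero j (Finset.mem_sdiff.mp hj).1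
            (Finset.mem_sdiff.mp hj).2
        have hint : ∑ j ∈ T ∩ A k, x k j ≤ a k := by
          rw [ha]; dsimp only
          exact Finset.sum_le_sum_of_subset_of_nonneg (Finset.inter_subset_right)
            (fun j _ _ => hxnn k j)
        linarith
      · rw [if_neg hk]
        refine le_of_eq (Finset.sum_eq_zero fun j hj => ?_)
        by_cases hjA : j ∈ A k
        · rcases eq_or_lt_of_le (hxnn k j) with h | h
          · exact h.symm
          · exfalso
            have hpj := hf1A k j h hjA
            have hjT' := (Finset.mem_filter.mp hj).2
            rw [hpj] at hjT'
            exact hk (Finset.mem_filter.mpr ⟨Finset.mem_univ k, hjT'⟩)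
        · exact hzero j hj hjA
    calc (T.card : ℝ) = ∑ j ∈ T, ∑ k, x k j := hTc
      _ = ∑ k, ∑ j ∈ T, x k j := Finset.sum_comm
      _ ≤ ∑ k, (if k ∈ S then a k else 0) := Finset.sum_le_sum fun k _ => hkey k
      _ = ∑ k ∈ S, a k := by rw [Finset.sum_ite_mem, Finset.univ_inter]
  have hcard : ((S.biUnion A).card : ℝ) ≤ (T.card : ℝ) := by
    exact_mod_cast Nat.cast_le.mpr (Finset.card_le_card hg2)
  refine ⟨S, hiS, hg1, le_antisymm (hU1 S) (le_trans hcard hg3)⟩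

end Cert

section CertUnique

attribute [local instance] Classical.propDecidable

lemma cert_contra {n : ℕ} (A : Fin n → Finset (Fin n)) (a a' : Fin n → ℝ)
    (h1' : ∀ S : Finset (Fin n), ∑ k ∈ S, a' k ≤ ((S.biUnion A).card : ℝ))
    (hle' : ∀ k, a' k ≤ 1)
    (h2 : ∀ i, a i < 1 → ∃ S : Finset (Fin n), i ∈ S ∧ (∀ k ∈ S, a k ≤ a i) ∧
      ∑ k ∈ S, a k = ((S.biUnion A).card : ℝ))
    {i : Fin n} (hlt : a i < a' i)
    (hmin : ∀ k, a k ≠ a' k → min (a i) (a' i) ≤ min (a k) (a' k)) : False := by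
  have hai1 : a i < 1 := lt_of_lt_of_le hlt (hle' i)
  obtain ⟨S, hiS, hmax, htight⟩ := h2 i hai1
  have hsum : ∑ k ∈ S, a' k ≤ ∑ k ∈ S, a k := by
    rw [htight]; exact h1' S
  have hex : ∃ k ∈ S, a' k < a k := by
    by_contra h
    push_neg at h
    have : ∑ k ∈ S, a k < ∑ k ∈ S, a' k :=
      Finset.sum_lt_sum (fun k hk => h k hk) ⟨i, hiS, hlt⟩
    linarith
  obtain ⟨k, hkS, hk⟩ := hex
  have := hmin k (ne_of_gt hk)
  rw [min_eq_left (le_of_lt hlt), min_eq_right (le_of_lt hk)] at this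
  have := hmax k hkS
  linarith

lemma cert_unique {n : ℕ} (A : Fin n → Finset (Fin n)) (a a' : Fin n → ℝ)
    (h1 : ∀ S : Finset (Fin n), ∑ k ∈ S, a k ≤ ((S.biUnion A).card : ℝ))
    (h1' : ∀ S : Finset (Fin n), ∑ k ∈ S, a' k ≤ ((S.biUnion A).card : ℝ))
    (hle : ∀ k, a k ≤ 1) (hle' : ∀ k, a' k ≤ 1)
    (h2 : ∀ i, a i < 1 → ∃ S : Finset (Fin n), i ∈ S ∧ (∀ k ∈ S, a k ≤ a i) ∧
      ∑ k ∈ S, a k = ((S.biUnion A).card : ℝ))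
    (h2' : ∀ i, a' i < 1 → ∃ S : Finset (Fin n), i ∈ S ∧ (∀ k ∈ S, a' k ≤ a' i) ∧
      ∑ k ∈ S, a' k = ((S.biUnion A).card : ℝ)) :
    ∀ i, a i = a' i := by
  by_contra hcon
  push_neg at hcon
  obtain ⟨i0, hi0⟩ := hcon
  set D := univ.filter (fun k => a k ≠ a' k) with hD
  have hDne : D.Nonempty := ⟨i0, Finset.mem_filter.mpr ⟨Finset.mem_univ _, hi0⟩⟩
  obtain ⟨i, hiD, hmin⟩ := Finset.exists_min_image D (fun k => min (a k) (a' k)) hDne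
  have hiD' : a i ≠ a' i := (Finset.mem_filter.mp hiD).2
  have hmin' : ∀ k, a k ≠ a' k → min (a i) (a' i) ≤ min (a k) (a' k) := by
    intro k hk
    exact hmin k (Finset.mem_filter.mpr ⟨Finset.mem_univ _, hk⟩)
  rcases lt_or_gt_of_ne hiD' with hlt | hgt
  · exact cert_contra A a a' h1' hle' h2 hlt hmin'
  · refine cert_contra A a' a h1 hle h2' hgt ?_
    intro k hk
    rw [min_comm (a' i) (a i), min_comm (a' k) (a k)]
    exact hmin' k (Ne.symm hk)

variable {n : ℕ} {u : Fin n → Fin n → ℝ} {αr βr : Fin n → ℝ}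

lemma hz_aval_le_one {x : Fin n → Fin n → ℝ} {p : Fin n → ℝ}
    (hz : IsHZWithPrices n u x p) (k : Fin n) :
    ∑ j ∈ Aset n u αr k, x k j ≤ 1 := by
  rw [← hz.2.1 k]
  exact Finset.sum_le_sum_of_subset_of_nonneg (Finset.subset_univ _)
    (fun j _ _ => (hz.1.1 k j).1)

lemma hz_util_unique (hbi : BiValued n u αr βr) (htop : ∀ i, ∃ j, u i j = αr i)
    {x y : Fin n → Fin n → ℝ} (hx : IsHZ n u x) (hy : IsHZ n u y) :
    ∀ i, util n u i (x i) = util n u i (y i) := by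
  obtain ⟨p, hp⟩ := hx
  obtain ⟨q, hq⟩ := hy
  have hcx := hz_cert hbi htop hp
  have hcy := hz_cert hbi htop hq
  have haeq := cert_unique (Aset n u αr) (fun k => ∑ j ∈ Aset n u αr k, x k j)
    (fun k => ∑ j ∈ Aset n u αr k, y k j) hcx.1 hcy.1
    (fun k => hz_aval_le_one hp k) (fun k => hz_aval_le_one hq k) hcx.2 hcy.2
  intro i
  rw [util_eq_aff hbi i (x i) (hp.2.1 i), util_eq_aff hbi i (y i) (hq.2.1 i)]
  have := haeq i
  rw [this]

end CertUnique

section Build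

attribute [local instance] Classical.propDecidable

lemma repl_matching {n : ℕ} (A : Fin n → Finset (Fin n)) (J S₁ : Finset (Fin n))
    (hS : S₁.Nonempty)
    (hratio : ∀ S ⊆ S₁, S.Nonempty →
      (S₁.biUnion A ∩ J).card * S.card ≤ (S.biUnion A ∩ J).card * S₁.card) :
    ∃ z : Fin n → Fin n → ℚ,
      (∀ i j, 0 ≤ z i j) ∧
      (∀ i j, z i j ≠ 0 → i ∈ S₁ ∧ j ∈ A i ∩ J) ∧
      (∀ i ∈ S₁, ∑ j, z i j = ((S₁.biUnion A ∩ J).card : ℚ) / S₁.card) ∧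
      (∀ j ∈ S₁.biUnion A ∩ J, ∑ i, z i j = 1) := by
  classical
  set T₁ := S₁.biUnion A ∩ J with hT₁
  set k := T₁.card with hk
  set m := S₁.card with hmdef
  have hm : 0 < m := Finset.card_pos.mpr hS
  have hsubT : ∀ i ∈ S₁, A i ∩ J ⊆ T₁ := by
    intro i hi
    exact Finset.inter_subset_inter (Finset.subset_biUnion_of_mem A hi) (le_refl J)
  set t : (↥S₁ × Fin k) → Finset (Fin n × Fin m) :=
    fun ic => (A (ic.1 : Fin n) ∩ J) ×ˢ (univ : Finset (Fin m)) with ht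
  have hall : ∀ W : Finset (↥S₁ × Fin k), W.card ≤ (W.biUnion t).card := by
    intro W
    rcases W.eq_empty_or_nonempty with hW | hW
    · simp [hW]
    set S := W.image (fun ic : ↥S₁ × Fin k => (ic.1 : Fin n)) with hSdef
    have hSsub : S ⊆ S₁ := by
      intro i hi
      obtain ⟨ic, _, hic⟩ := Finset.mem_image.mp hi
      exact hic ▸ ic.1.2
    have hSne : S.Nonempty := hW.image _
    have hWcard : W.card ≤ S.card * k := by
      have hinj : Set.InjOn (fun ic : ↥S₁ × Fin k => ((ic.1 : Fin n), ic.2)) W := by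
        intro a _ b _ hab
        simp only [Prod.mk.injEq] at hab
        exact Prod.ext (Subtype.ext hab.1) hab.2
      have hmaps : ∀ ic ∈ W, ((ic.1 : Fin n), ic.2) ∈ S ×ˢ (univ : Finset (Fin k)) := by
        intro ic hic
        exact Finset.mem_product.mpr ⟨Finset.mem_image_of_mem _ hic, Finset.mem_univ _⟩
      calc W.card ≤ (S ×ˢ (univ : Finset (Fin k))).card :=
            Finset.card_le_card_of_injOn _ hmaps hinj
        _ = S.card * k := by rw [Finset.card_product, Finset.card_univ, Fintype.card_fin]
    have hbiU : W.biUnion t = (S.biUnion A ∩ J) ×ˢ (univ : Finset (Fin m)) := by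
      ext a
      constructor
      · intro ha
        obtain ⟨ic, hicW, hic⟩ := Finset.mem_biUnion.mp ha
        rw [ht] at hic
        obtain ⟨h1, _⟩ := Finset.mem_product.mp hic
        obtain ⟨hA, hJ⟩ := Finset.mem_inter.mp h1
        refine Finset.mem_product.mpr ⟨Finset.mem_inter.mpr ⟨?_, hJ⟩, Finset.mem_univ _⟩
        exact Finset.mem_biUnion.mpr ⟨(ic.1 : Fin n), Finset.mem_image_of_mem _ hicW, hA⟩
      · intro ha
        obtain ⟨h1, _⟩ := Finset.mem_product.mp ha
        obtain ⟨hbi2, hJ⟩ := Finset.mem_inter.mp h1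
        obtain ⟨i, hiS, hai⟩ := Finset.mem_biUnion.mp hbi2
        obtain ⟨ic, hicW, hic⟩ := Finset.mem_image.mp hiS
        refine Finset.mem_biUnion.mpr ⟨ic, hicW, ?_⟩
        rw [ht]
        refine Finset.mem_product.mpr ⟨Finset.mem_inter.mpr ⟨?_, hJ⟩, Finset.mem_univ _⟩
        rw [hic]
        exact hai
    have hbc : (W.biUnion t).card = (S.biUnion A ∩ J).card * m := by
      rw [hbiU, Finset.card_product, Finset.card_univ, Fintype.card_fin]
    have := hratio S hSsub hSne
    rw [hbc]
    calc W.card ≤ S.card * k := hWcard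
      _ = k * S.card := Nat.mul_comm _ _
      _ ≤ (S.biUnion A ∩ J).card * m := this
  obtain ⟨f, hfinj, hfmem⟩ := (Finset.all_card_le_biUnion_card_iff_exists_injective t).mp hall
  have hfT : ∀ ic, f ic ∈ T₁ ×ˢ (univ : Finset (Fin m)) := by
    intro ic
    have := hfmem ic
    rw [ht] at this
    have h2 := Finset.mem_product.mp this
    exact Finset.mem_product.mpr ⟨hsubT _ ic.1.2 h2.1, h2.2⟩
  have himg : Finset.image f univ = T₁ ×ˢ (univ : Finset (Fin m)) := by
    apply Finset.eq_of_subset_of_card_le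
    · intro a ha
      obtain ⟨ic, _, hic⟩ := Finset.mem_image.mp ha
      exact hic ▸ hfT ic
    · rw [Finset.card_image_of_injective _ hfinj, Finset.card_product, Finset.card_univ,
        Finset.card_univ, Fintype.card_prod, Fintype.card_fin, Fintype.card_coe,
        Fintype.card_fin]
      rw [← hmdef, ← hk]
      exact le_of_eq (Nat.mul_comm k m)
  set z : Fin n → Fin n → ℚ := fun i j =>
    if h : i ∈ S₁ then
      (((univ.filter (fun c : Fin k => (f (⟨i, h⟩, c)).1 = j)).card : ℚ) / m) else 0 with hz
  have hznn : ∀ i j, 0 ≤ z i j := by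
    intro i j
    rw [hz]
    dsimp only
    split
    · positivity
    · exact le_refl 0
  have hzsupp : ∀ i j, z i j ≠ 0 → i ∈ S₁ ∧ j ∈ A i ∩ J := by
    intro i j hij
    rw [hz] at hij
    dsimp only at hij
    split at hij
    · rename_i h
      refine ⟨h, ?_⟩
      have : (univ.filter (fun c : Fin k => (f (⟨i, h⟩, c)).1 = j)).card ≠ 0 := by
        intro h0
        rw [h0] at hij
        simp at hij
      obtain ⟨c, hc⟩ := Finset.card_ne_zero.mp this
      have hcmem := Finset.mem_filter.mp hc
      have := hfmem (⟨i, h⟩, c)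
      rw [ht] at this
      have h2 := (Finset.mem_product.mp this).1
      rw [hcmem.2] at h2
      exact h2
    · exact absurd rfl hij
  have hzrow : ∀ i ∈ S₁, ∑ j, z i j = (k : ℚ) / m := by
    intro i hi
    have : ∑ j, z i j = (∑ j, ((univ.filter
        (fun c : Fin k => (f (⟨i, hi⟩, c)).1 = j)).card : ℚ)) / m := by
      rw [Finset.sum_div]
      refine Finset.sum_congr rfl fun j _ => ?_
      rw [hz]
      dsimp only
      rw [dif_pos hi]
    rw [this]
    have hfib : ∑ j, ((univ.filter (fun c : Fin k => (f (⟨i, hi⟩, c)).1 = j)).card) = k := by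
      have := Finset.card_eq_sum_card_fiberwise
        (f := fun c : Fin k => (f (⟨i, hi⟩, c)).1) (s := univ) (t := univ)
        (fun c _ => Finset.mem_univ _)
      rw [Finset.card_univ, Fintype.card_fin] at this
      exact this.symm
    rw [← Nat.cast_sum, hfib]
  have hzcol : ∀ j ∈ T₁, ∑ i, z i j = 1 := by
    intro j hj
    set G := univ.filter (fun ic : ↥S₁ × Fin k => (f ic).1 = j) with hG
    have hGcard : G.card = m := by
      have hbij : G.card = (({j} : Finset (Fin n)) ×ˢ (univ : Finset (Fin m))).card := by
        apply Finset.card_bij (fun ic _ => f ic)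
        · intro ic hic
          have h1 := (Finset.mem_filter.mp hic).2
          have h2 := hfT ic
          refine Finset.mem_product.mpr ⟨?_, Finset.mem_univ _⟩
          rw [Finset.mem_singleton, h1]
        · intro a ha b hb hab
          exact hfinj hab
        · intro a ha
          have ha1 := Finset.mem_product.mp ha
          have haj : a.1 = j := Finset.mem_singleton.mp ha1.1
          have : a ∈ T₁ ×ˢ (univ : Finset (Fin m)) :=
            Finset.mem_product.mpr ⟨haj ▸ hj, Finset.mem_univ _⟩
          rw [← himg] at this
          obtain ⟨ic, _, hic⟩ := Finset.mem_image.mp this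
          exact ⟨ic, Finset.mem_filter.mpr ⟨Finset.mem_univ _, by rw [hic, haj]⟩, hic⟩
      rw [hbij, Finset.card_product, Finset.card_singleton, Finset.card_univ,
        Fintype.card_fin, one_mul]
    have hGsum : G.card = ∑ i ∈ S₁, (univ.filter
        (fun c : Fin k => ∃ h : i ∈ S₁, (f (⟨i, h⟩, c)).1 = j)).card := by
      have := Finset.card_eq_sum_card_fiberwise
        (f := fun ic : ↥S₁ × Fin k => (ic.1 : Fin n)) (s := G) (t := S₁)
        (fun ic _ => ic.1.2)
      rw [this]
      refine Finset.sum_congr rfl fun i hi => ?_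
      apply Finset.card_bij (fun ic _ => ic.2)
      · intro ic hic
        have h1 := Finset.mem_filter.mp hic
        have h2 := (Finset.mem_filter.mp h1.1).2
        refine Finset.mem_filter.mpr ⟨Finset.mem_univ _, ⟨hi, ?_⟩⟩
        have : ic.1 = ⟨i, hi⟩ := Subtype.ext h1.2
        rw [← this]
        exact h2
      · intro a ha b hb hab
        have ha1 : a.1 = ⟨i, hi⟩ := Subtype.ext (Finset.mem_filter.mp ha).2
        have hb1 : b.1 = ⟨i, hi⟩ := Subtype.ext (Finset.mem_filter.mp hb).2
        exact Prod.ext (ha1.trans hb1.symm) hab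
      · intro c hc
        obtain ⟨h, hcj⟩ := (Finset.mem_filter.mp hc).2
        refine ⟨(⟨i, h⟩, c), ?_, rfl⟩
        exact Finset.mem_filter.mpr ⟨Finset.mem_filter.mpr ⟨Finset.mem_univ _, hcj⟩, rfl⟩
    have : ∑ i, z i j = ∑ i ∈ S₁, z i j := by
      rw [← Finset.sum_subset (Finset.subset_univ S₁)]
      intro i _ hi
      rw [hz]
      dsimp only
      rw [dif_neg hi]
    rw [this]
    have : ∑ i ∈ S₁, z i j = (∑ i ∈ S₁, ((univ.filter
        (fun c : Fin k => ∃ h : i ∈ S₁, (f (⟨i, h⟩, c)).1 = j)).card : ℚ)) / m := by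
      rw [Finset.sum_div]
      refine Finset.sum_congr rfl fun i hi => ?_
      rw [hz]
      dsimp only
      rw [dif_pos hi]
      have heq : (univ.filter (fun c : Fin k => (f (⟨i, hi⟩, c)).1 = j))
          = (univ.filter (fun c : Fin k => ∃ h : i ∈ S₁, (f (⟨i, h⟩, c)).1 = j)) := by
        apply Finset.filter_congr
        intro c _
        constructor
        · intro hcj
          exact ⟨hi, hcj⟩
        · rintro ⟨h, hcj⟩
          exact hcj
      rw [heq]
    rw [this, ← Nat.cast_sum, ← hGsum, hGcard]
    rw [div_self]
    exact ne_of_gt (by exact_mod_cast hm)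
  exact ⟨z, hznn, hzsupp, hzrow, hzcol⟩

end Build

section BuildMain

attribute [local instance] Classical.propDecidable

lemma biUnion_inter_eq {n : ℕ} (A : Fin n → Finset (Fin n)) (J : Finset (Fin n))
    (S : Finset (Fin n)) :
    S.biUnion (fun i => A i ∩ J) = S.biUnion A ∩ J := by
  ext j
  simp only [Finset.mem_biUnion, Finset.mem_inter]
  constructor
  · rintro ⟨i, hi, hA, hJ⟩
    exact ⟨⟨i, hi, hA⟩, hJ⟩
  · rintro ⟨⟨i, hi, hA⟩, hJ⟩
    exact ⟨i, hi, hA, hJ⟩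

set_option maxHeartbeats 10000000 in
lemma build {n : ℕ} (A : Fin n → Finset (Fin n)) :
    ∀ (N : ℕ) (I J : Finset (Fin n)), I.card ≤ N →
    (∀ i ∈ I, (A i ∩ J).Nonempty) → I.card ≤ J.card →
    ∃ (x : Fin n → Fin n → ℚ) (p : Fin n → ℚ) (μ : Fin n → ℚ),
      (∀ i j, 0 ≤ x i j) ∧
      (∀ i, i ∉ I → ∀ j, x i j = 0) ∧
      (∀ i j, j ∉ J → x i j = 0) ∧
      (∀ i ∈ I, ∑ j, x i j = 1) ∧
      (∀ j ∈ J, ∑ i, x i j ≤ 1) ∧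
      (∀ j, 0 ≤ p j) ∧
      (∀ j, j ∉ J → p j = 0) ∧
      (∀ j ∈ J, ∑ i, x i j < 1 → p j = 0) ∧
      (∀ i ∈ I, 0 < μ i ∧ μ i ≤ 1 ∧ ∑ j ∈ A i, x i j = μ i) ∧
      (∀ i ∈ I, μ i < 1 → (∀ j ∈ A i ∩ J, 1 / μ i ≤ p j) ∧ ∑ j, p j * x i j = 1) ∧
      (∀ i ∈ I, μ i = 1 → ∑ j, p j * x i j = 0) ∧
      (∀ i ∈ I, 1 ≤ μ i ∨
        ∃ S, S ⊆ I ∧ S.Nonempty ∧ ((S.biUnion A ∩ J).card : ℚ) ≤ μ i * S.card) := by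
  intro N
  induction N with
  | zero =>
    intro I J hIN hA hIJ
    have hIe : I = ∅ := Finset.card_eq_zero.mp (Nat.le_zero.mp hIN)
    subst hIe
    refine ⟨fun _ _ => 0, fun _ => 0, fun _ => 1, ?_⟩
    refine ⟨fun i j => le_refl 0, fun i _ j => rfl, fun i j _ => rfl, ?_, ?_, ?_, ?_, ?_, ?_,
      ?_, ?_, ?_⟩
    · intro i hi; exact absurd hi (Finset.notMem_empty i)
    · intro j _; simp
    · intro j; exact le_refl 0
    · intro j _; rfl
    · intro j _ _; rfl
    · intro i hi; exact absurd hi (Finset.notMem_empty i)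
    · intro i hi; exact absurd hi (Finset.notMem_empty i)
    · intro i hi; exact absurd hi (Finset.notMem_empty i)
    · intro i hi; exact absurd hi (Finset.notMem_empty i)
  | succ N ih =>
    intro I J hIN hA hIJ
    rcases I.eq_empty_or_nonempty with hIe | hIne
    · subst hIe
      refine ⟨fun _ _ => 0, fun _ => 0, fun _ => 1, ?_⟩
      refine ⟨fun i j => le_refl 0, fun i _ j => rfl, fun i j _ => rfl, ?_, ?_, ?_, ?_, ?_, ?_,
        ?_, ?_, ?_⟩
      · intro i hi; exact absurd hi (Finset.notMem_empty i)
      · intro j _; simp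
      · intro j; exact le_refl 0
      · intro j _; rfl
      · intro j _ _; rfl
      · intro i hi; exact absurd hi (Finset.notMem_empty i)
      · intro i hi; exact absurd hi (Finset.notMem_empty i)
      · intro i hi; exact absurd hi (Finset.notMem_empty i)
      · intro i hi; exact absurd hi (Finset.notMem_empty i)
    by_cases hHall : ∀ S ⊆ I, S.Nonempty → S.card ≤ (S.biUnion A ∩ J).card
    · -- Hall case : perfect matching, zero prices
      have hallcond : ∀ s : Finset ↥I, s.card ≤ (s.biUnion (fun i => A (i : Fin n) ∩ J)).card := by
        intro s
        rcases s.eq_empty_or_nonempty with hse | hsne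
        · simp [hse]
        set S := s.image (fun i : ↥I => (i : Fin n)) with hS
        have hcard : s.card = S.card :=
          (Finset.card_image_of_injective s Subtype.val_injective).symm
        have hSsub : S ⊆ I := by
          intro i hi
          obtain ⟨ii, _, hii⟩ := Finset.mem_image.mp hi
          exact hii ▸ ii.2
        have hSne : S.Nonempty := hsne.image _
        have hbiU : s.biUnion (fun i => A (i : Fin n) ∩ J)
            = S.biUnion (fun i => A i ∩ J) := by
          ext j
          simp only [Finset.mem_biUnion, hS, Finset.mem_image]
          constructor
          · rintro ⟨ii, hii, hj⟩
            exact ⟨(ii : Fin n), ⟨ii, hii, rfl⟩, hj⟩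
          · rintro ⟨i, ⟨ii, hii, rfl⟩, hj⟩
            exact ⟨ii, hii, hj⟩
        rw [hcard, hbiU, biUnion_inter_eq]
        exact hHall S hSsub hSne
      obtain ⟨g, hginj, hgmem⟩ :=
        (Finset.all_card_le_biUnion_card_iff_exists_injective
          (fun i : ↥I => A (i : Fin n) ∩ J)).mp hallcond
      set x : Fin n → Fin n → ℚ := fun i j =>
        if h : i ∈ I then (if g ⟨i, h⟩ = j then 1 else 0) else 0 with hx
      refine ⟨x, fun _ => 0, fun _ => 1, ?_, ?_, ?_, ?_, ?_, ?_, ?_, ?_, ?_, ?_, ?_, ?_⟩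
      · intro i j
        rw [hx]; dsimp only
        split
        · split
          · exact zero_le_one
          · exact le_refl 0
        · exact le_refl 0
      · intro i hi j
        rw [hx]; dsimp only
        rw [dif_neg hi]
      · intro i j hj
        rw [hx]; dsimp only
        split
        · rename_i h
          split
          · rename_i hg
            exfalso
            have := hgmem ⟨i, h⟩
            rw [hg] at this
            exact hj (Finset.mem_inter.mp this).2
          · rfl
        · rfl
      · intro i hi
        have : ∀ j, x i j = if g ⟨i, hi⟩ = j then 1 else 0 := by
          intro j; rw [hx]; dsimp only; rw [dif_pos hi]
        rw [Finset.sum_congr rfl (fun j _ => this j)]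
        rw [Finset.sum_ite_eq univ (g ⟨i, hi⟩) (fun _ => (1:ℚ))]
        rw [if_pos (Finset.mem_univ _)]
      · intro j _
        have hsum : ∑ i, x i j = ∑ i ∈ I, x i j := by
          rw [← Finset.sum_subset (Finset.subset_univ I)]
          intro i _ hi
          rw [hx]; dsimp only; rw [dif_neg hi]
        rw [hsum, ← Finset.sum_attach I (fun i => x i j)]
        have : ∀ ii : ↥I, x (ii : Fin n) j = if g ii = j then 1 else 0 := by
          intro ii
          rw [hx]; dsimp only
          rw [dif_pos ii.2]
        rw [Finset.sum_congr rfl (fun ii _ => this ii)]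
        rw [Finset.sum_boole]
        have : (I.attach.filter (fun ii => g ii = j)).card ≤ 1 := by
          refine Finset.card_le_one.mpr ?_
          intro a ha b hb
          have h1 := (Finset.mem_filter.mp ha).2
          have h2 := (Finset.mem_filter.mp hb).2
          exact hginj (h1.trans h2.symm)
        exact_mod_cast this
      · intro j; exact le_refl 0
      · intro j _; rfl
      · intro j _ _; rfl
      · intro i hi
        refine ⟨zero_lt_one, le_refl 1, ?_⟩
        have : ∀ j, x i j = if g ⟨i, hi⟩ = j then 1 else 0 := by
          intro j; rw [hx]; dsimp only; rw [dif_pos hi]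
        rw [Finset.sum_congr rfl (fun j _ => this j)]
        rw [Finset.sum_ite_eq (A i) (g ⟨i, hi⟩) (fun _ => (1:ℚ))]
        rw [if_pos (Finset.mem_inter.mp (hgmem ⟨i, hi⟩)).1]
      · intro i _ h
        exact absurd h (lt_irrefl 1)
      · intro i _ _
        simp
      · intro i _
        exact Or.inl (le_refl 1)
    · -- recursive case
      push_neg at hHall
      obtain ⟨Sb, hSbI, hSbne, hSblt⟩ := hHall
      set P := I.powerset.filter (fun S => S.Nonempty) with hP
      have hPne : P.Nonempty := ⟨Sb, Finset.mem_filter.mpr ⟨Finset.mem_powerset.mpr hSbI, hSbne⟩⟩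
      obtain ⟨S₁, hS₁P, hS₁min⟩ := Finset.exists_min_image P
        (fun S => ((S.biUnion A ∩ J).card : ℚ) / S.card) hPne
      have hS₁I : S₁ ⊆ I := Finset.mem_powerset.mp (Finset.mem_filter.mp hS₁P).1
      have hS₁ne : S₁.Nonempty := (Finset.mem_filter.mp hS₁P).2
      set T₁ := S₁.biUnion A ∩ J with hT₁
      set k := T₁.card with hk
      set m := S₁.card with hm
      have hm0 : 0 < m := Finset.card_pos.mpr hS₁ne
      have hT₁J : T₁ ⊆ J := Finset.inter_subset_right
      have hk0 : 0 < k := by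
        obtain ⟨i₀, hi₀⟩ := hS₁ne
        obtain ⟨j₀, hj₀⟩ := hA i₀ (hS₁I hi₀)
        refine Finset.card_pos.mpr ⟨j₀, ?_⟩
        rw [hT₁]
        obtain ⟨hj₀A, hj₀J⟩ := Finset.mem_inter.mp hj₀
        exact Finset.mem_inter.mpr ⟨Finset.mem_biUnion.mpr ⟨i₀, hi₀, hj₀A⟩, hj₀J⟩
      have hminQ : ∀ S ⊆ I, S.Nonempty →
          (k:ℚ) * S.card ≤ ((S.biUnion A ∩ J).card : ℚ) * m := by
        intro S hSI hSne
        have h0 := hS₁min S (Finset.mem_filter.mpr ⟨Finset.mem_powerset.mpr hSI, hSne⟩)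
        have hmpos : (0:ℚ) < m := by exact_mod_cast hm0
        have hSpos : (0:ℚ) < S.card := by exact_mod_cast Finset.card_pos.mpr hSne
        rw [div_le_div_iff₀ hmpos hSpos] at h0
        linarith
      have hkm : k < m := by
        have h1 := hminQ Sb hSbI hSbne
        have hSbpos : (0:ℚ) < Sb.card := by exact_mod_cast Finset.card_pos.mpr hSbne
        have h2 : ((Sb.biUnion A ∩ J).card : ℚ) < Sb.card := by exact_mod_cast hSblt
        have hmpos : (0:ℚ) < m := by exact_mod_cast hm0
        have : (k:ℚ) < m := by nlinarith
        exact_mod_cast this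
      set lam : ℚ := (k : ℚ) / m with hlam
      have hmQ : ((m:ℚ)) ≠ 0 := ne_of_gt (by exact_mod_cast hm0)
      have hlam0 : 0 < lam := div_pos (by exact_mod_cast hk0) (by exact_mod_cast hm0)
      have hlam1 : lam < 1 := by
        rw [hlam, div_lt_one (by exact_mod_cast hm0)]
        exact_mod_cast hkm
      have hlamm : lam * m = k := div_mul_cancel₀ _ hmQ
      have hratioN : ∀ S ⊆ S₁, S.Nonempty →
          (S₁.biUnion A ∩ J).card * S.card ≤ (S.biUnion A ∩ J).card * S₁.card := by
        intro S hSS hSne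
        have := hminQ S (hSS.trans hS₁I) hSne
        rw [hT₁] at hk
        have hint : (k:ℚ) * S.card ≤ ((S.biUnion A ∩ J).card : ℚ) * m := this
        rw [hk, hm] at hint
        exact_mod_cast hint
      obtain ⟨z, hznn, hzsupp, hzrow0, hzcol0⟩ := repl_matching A J S₁ hS₁ne hratioN
      have hzrow : ∀ i ∈ S₁, ∑ j, z i j = lam := by
        intro i hi
        rw [hzrow0 i hi, hlam, hk, hm, hT₁]
      have hzcol : ∀ j ∈ T₁, ∑ i, z i j = 1 := by
        intro j hj
        exact hzcol0 j (hT₁ ▸ hj)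
      set I' := I \ S₁ with hI'
      set J' := J \ T₁ with hJ'
      have hI'sub : I' ⊆ I := Finset.sdiff_subset
      have hJ'sub : J' ⊆ J := Finset.sdiff_subset
      have hI'card : I'.card = I.card - m := Finset.card_sdiff_of_subset hS₁I
      have hJ'card : J'.card = J.card - k := Finset.card_sdiff_of_subset hT₁J
      have hmI : m ≤ I.card := Finset.card_le_card hS₁I
      have hkJ : k ≤ J.card := Finset.card_le_card hT₁J
      have hA' : ∀ i ∈ I', (A i ∩ J').Nonempty := by
        intro i hi
        by_contra hempty
        rw [Finset.not_nonempty_iff_eq_empty] at hempty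
        have hsub : A i ∩ J ⊆ T₁ := by
          intro j hj
          by_contra hjT
          have hjJ' : j ∈ J' := Finset.mem_sdiff.mpr ⟨(Finset.mem_inter.mp hj).2, hjT⟩
          have : j ∈ A i ∩ J' := Finset.mem_inter.mpr ⟨(Finset.mem_inter.mp hj).1, hjJ'⟩
          rw [hempty] at this
          exact absurd this (Finset.notMem_empty j)
        have hiS₁ : i ∉ S₁ := (Finset.mem_sdiff.mp hi).2
        have hiI : i ∈ I := (Finset.mem_sdiff.mp hi).1
        have hins : insert i S₁ ⊆ I := Finset.insert_subset hiI hS₁I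
        have hbu : (insert i S₁).biUnion A ∩ J = T₁ := by
          rw [Finset.biUnion_insert, Finset.union_inter_distrib_right, ← hT₁]
          exact Finset.union_eq_right.mpr hsub
        have hcard : (insert i S₁).card = m + 1 := Finset.card_insert_of_notMem hiS₁
        have h0 := hminQ (insert i S₁) hins (Finset.insert_nonempty i S₁)
        rw [hbu, hcard] at h0
        have hkQ : (0:ℚ) < k := by exact_mod_cast hk0
        push_cast at h0
        nlinarith
      have hN' : I'.card ≤ N := by rw [hI'card]; omega
      have hIJ' : I'.card ≤ J'.card := by rw [hI'card, hJ'card]; omega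
      obtain ⟨xin, pin, μin, in1, in2, in3, in4, in5, in6, in7, in8, in9, in10, in11, in12⟩ :=
        ih I' J' hN' hA' hIJ'
      clear ih hS₁min hS₁P hPne hSblt hSbne hSbI
      set sfun : Fin n → ℚ := fun j => 1 - ∑ i, xin i j with hsfun
      set F : ℚ := ∑ j ∈ J', sfun j with hF
      have hsnn : ∀ j ∈ J', 0 ≤ sfun j := by
        intro j hj
        rw [hsfun]; dsimp only
        linarith [in5 j hj]
      have hinmass : ∑ j ∈ J', ∑ i, xin i j = (I'.card : ℚ) := by
        rw [Finset.sum_comm]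
        have hterm : ∀ i : Fin n, ∑ j ∈ J', xin i j = if i ∈ I' then (1:ℚ) else 0 := by
          intro i
          by_cases hi : i ∈ I'
          · rw [if_pos hi, Finset.sum_subset (Finset.subset_univ J') (fun j _ hj => in3 i j hj)]
            exact in4 i hi
          · rw [if_neg hi]
            exact Finset.sum_eq_zero (fun j _ => in2 i hi j)
        rw [Finset.sum_congr rfl (fun i _ => hterm i), Finset.sum_ite_mem, Finset.univ_inter,
          Finset.sum_const, nsmul_eq_mul, mul_one]
      have hFval : F = (J'.card : ℚ) - I'.card := by
        rw [hF, hsfun]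
        dsimp only
        rw [Finset.sum_sub_distrib, Finset.sum_const, nsmul_eq_mul, mul_one, hinmass]
      have hmkF : (m:ℚ) - k ≤ F := by
        rw [hFval, hI'card, hJ'card, Nat.cast_sub hkJ, Nat.cast_sub hmI]
        have : (I.card : ℚ) ≤ J.card := by exact_mod_cast hIJ
        linarith
      have hFpos : 0 < F := by
        have : (k:ℚ) < m := by exact_mod_cast hkm
        linarith
      set w : Fin n → Fin n → ℚ := fun i j =>
        if i ∈ S₁ ∧ j ∈ J' then (1 - lam) * sfun j / F else 0 with hw
      have hwnn : ∀ i j, 0 ≤ w i j := by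
        intro i j
        rw [hw]; dsimp only
        split
        · rename_i h
          have := hsnn j h.2
          apply div_nonneg (mul_nonneg (by linarith) this) (le_of_lt hFpos)
        · exact le_refl 0
      have hw0S : ∀ i j, i ∉ S₁ → w i j = 0 := by
        intro i j h
        rw [hw]; dsimp only
        rw [if_neg (fun hc => h hc.1)]
      have hw0J : ∀ i j, j ∉ J' → w i j = 0 := by
        intro i j h
        rw [hw]; dsimp only
        rw [if_neg (fun hc => h hc.2)]
      have hw0 : ∀ i j, w i j ≠ 0 → i ∈ S₁ ∧ j ∈ J' ∧ 0 < sfun j := by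
        intro i j hne
        rw [hw] at hne; dsimp only at hne
        by_cases h : i ∈ S₁ ∧ j ∈ J'
        · refine ⟨h.1, h.2, ?_⟩
          rcases lt_or_eq_of_le (hsnn j h.2) with hlt | heq
          · exact hlt
          · exfalso
            apply hne
            rw [if_pos h, ← heq]
            ring
        · exact absurd (if_neg h) hne
      have hwrow : ∀ i ∈ S₁, ∑ j, w i j = 1 - lam := by
        intro i hi
        have h1 : ∑ j, w i j = ∑ j ∈ J', w i j :=
          (Finset.sum_subset (Finset.subset_univ J') (fun j _ hj => hw0J i j hj)).symm
        have h1b : ∑ j ∈ J', w i j = ∑ j ∈ J', (1 - lam) * sfun j / F :=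
          Finset.sum_congr rfl (fun j hj => by
            rw [hw]; dsimp only; rw [if_pos ⟨hi, hj⟩])
        have h2 : ∑ j ∈ J', (1 - lam) * sfun j / F = (1 - lam) * F / F := by
          rw [← Finset.sum_div, ← Finset.mul_sum, ← hF]
        rw [h1, h1b, h2, mul_div_assoc, div_self (ne_of_gt hFpos), mul_one]
      have hwcol : ∀ j ∈ J', ∑ i, w i j = (m:ℚ) * ((1 - lam) * sfun j / F) := by
        intro j hj
        have h1 : ∑ i, w i j = ∑ i ∈ S₁, w i j :=
          (Finset.sum_subset (Finset.subset_univ S₁) (fun i _ hi => hw0S i j hi)).symm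
        have h1b : ∑ i ∈ S₁, w i j = ∑ _i ∈ S₁, (1 - lam) * sfun j / F :=
          Finset.sum_congr rfl (fun i hi => by
            rw [hw]; dsimp only; rw [if_pos ⟨hi, hj⟩])
        rw [h1, h1b, Finset.sum_const, nsmul_eq_mul, ← hm]
      have hwcol0 : ∀ j, j ∉ J' → ∑ i, w i j = 0 := by
        intro j hj
        exact Finset.sum_eq_zero (fun i _ => hw0J i j hj)
      have hz0S : ∀ i j, i ∉ S₁ → z i j = 0 := by
        intro i j h
        by_contra h'
        exact h (hzsupp i j h').1
      have hz0T : ∀ i j, j ∉ T₁ → z i j = 0 := by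
        intro i j h
        by_contra h'
        obtain ⟨hiS, hjA⟩ := hzsupp i j h'
        apply h
        rw [hT₁]
        obtain ⟨h1, h2⟩ := Finset.mem_inter.mp hjA
        exact Finset.mem_inter.mpr ⟨Finset.mem_biUnion.mpr ⟨i, hiS, h1⟩, h2⟩
      have hz0A : ∀ i j, j ∉ A i → z i j = 0 := by
        intro i j h
        by_contra h'
        exact h (Finset.mem_inter.mp (hzsupp i j h').2).1
      have hAT : ∀ i ∈ S₁, ∀ j ∈ A i, j ∈ J → j ∈ T₁ := by
        intro i hi j hjA hjJ
        rw [hT₁]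
        exact Finset.mem_inter.mpr ⟨Finset.mem_biUnion.mpr ⟨i, hi, hjA⟩, hjJ⟩
      have hI'S₁ : ∀ i ∈ I', i ∉ S₁ := fun i hi => (Finset.mem_sdiff.mp hi).2
      have hS₁I'2 : ∀ i ∈ S₁, i ∉ I' := fun i hi hc => (Finset.mem_sdiff.mp hc).2 hi
      have hT₁J'2 : ∀ j ∈ T₁, j ∉ J' := fun j hj hc => (Finset.mem_sdiff.mp hc).2 hj
      -- key monotonicity: lam ≤ μin on I'
      have hunion : ∀ S', S' ⊆ I' → S'.Nonempty →
          (((S₁ ∪ S').biUnion A ∩ J).card : ℚ) ≤ (k:ℚ) + ((S'.biUnion A ∩ J').card : ℚ) ∧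
          ((S₁ ∪ S').card : ℚ) = (m:ℚ) + S'.card ∧ (S₁ ∪ S') ⊆ I := by
        intro S' hS'I' _
        have hSu : S₁ ∪ S' ⊆ I := Finset.union_subset hS₁I (hS'I'.trans hI'sub)
        have hdisj : Disjoint S₁ S' := by
          rw [Finset.disjoint_left]
          intro a ha hc
          exact (Finset.mem_sdiff.mp (hS'I' hc)).2 ha
        have hcardu : (S₁ ∪ S').card = m + S'.card := by
          rw [Finset.card_union_of_disjoint hdisj, hm]
        have he : (S₁ ∪ S').biUnion A ∩ J ⊆ T₁ ∪ (S'.biUnion A ∩ J') := by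
          intro j hj
          obtain ⟨hjb, hjJ⟩ := Finset.mem_inter.mp hj
          obtain ⟨i', hi', hji'⟩ := Finset.mem_biUnion.mp hjb
          rcases Finset.mem_union.mp hi' with h | h
          · exact Finset.mem_union_left _ (hAT i' h j hji' hjJ)
          · by_cases hjT : j ∈ T₁
            · exact Finset.mem_union_left _ hjT
            · refine Finset.mem_union_right _ ?_
              exact Finset.mem_inter.mpr ⟨Finset.mem_biUnion.mpr ⟨i', h, hji'⟩,
                Finset.mem_sdiff.mpr ⟨hjJ, hjT⟩⟩
        have hcb : ((S₁ ∪ S').biUnion A ∩ J).card ≤ k + (S'.biUnion A ∩ J').card := by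
          calc ((S₁ ∪ S').biUnion A ∩ J).card ≤ (T₁ ∪ (S'.biUnion A ∩ J')).card :=
                Finset.card_le_card he
            _ ≤ k + (S'.biUnion A ∩ J').card := by
                rw [hk]
                exact Finset.card_union_le _ _
        refine ⟨by exact_mod_cast hcb, by exact_mod_cast hcardu, hSu⟩
      have hlamμ : ∀ i ∈ I', lam ≤ μin i := by
        intro i hi
        rcases in12 i hi with h1 | ⟨S', hS'I', hS'ne, hb⟩
        · linarith
        · obtain ⟨hcb, hcardu, hSu⟩ := hunion S' hS'I' hS'ne
          have hmin2 := hminQ (S₁ ∪ S') hSu (Finset.Nonempty.mono Finset.subset_union_left hS₁ne)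
          have hS'pos : (0:ℚ) < S'.card := by exact_mod_cast Finset.card_pos.mpr hS'ne
          have hmpos : (0:ℚ) < m := by exact_mod_cast hm0
          -- k*(m+|S'|) ≤ (k + N')*m  where N' ≤ μin i * |S'|
          have hq : (k:ℚ) * ((m:ℚ) + S'.card) ≤ ((k:ℚ) + ((S'.biUnion A ∩ J').card : ℚ)) * m := by
            calc (k:ℚ) * ((m:ℚ) + S'.card) = (k:ℚ) * ((S₁ ∪ S').card : ℚ) := by rw [hcardu]
              _ ≤ (((S₁ ∪ S').biUnion A ∩ J).card : ℚ) * m := hmin2 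
              _ ≤ ((k:ℚ) + ((S'.biUnion A ∩ J').card : ℚ)) * m :=
                  mul_le_mul_of_nonneg_right hcb (le_of_lt hmpos)
          have h2 : (k:ℚ) * S'.card ≤ ((S'.biUnion A ∩ J').card : ℚ) * m := by
            have hq2 : (k:ℚ) * (m:ℚ) + (k:ℚ) * S'.card
                ≤ (k:ℚ) * (m:ℚ) + ((S'.biUnion A ∩ J').card : ℚ) * (m:ℚ) := by
              calc (k:ℚ) * (m:ℚ) + (k:ℚ) * S'.card = (k:ℚ) * ((m:ℚ) + S'.card) := by ring
                _ ≤ ((k:ℚ) + ((S'.biUnion A ∩ J').card : ℚ)) * m := hq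
                _ = (k:ℚ) * (m:ℚ) + ((S'.biUnion A ∩ J').card : ℚ) * (m:ℚ) := by ring
            linarith
          have h3 : lam * S'.card ≤ ((S'.biUnion A ∩ J').card : ℚ) := by
            rw [hlam, div_mul_eq_mul_div, div_le_iff₀ hmpos]
            exact h2
          have h4 : lam * S'.card ≤ μin i * S'.card := le_trans h3 hb
          exact (mul_le_mul_iff_left₀ hS'pos).mp h4
      -- the combined solution
      set x : Fin n → Fin n → ℚ := fun i j => z i j + w i j + xin i j with hx
      set p : Fin n → ℚ := fun j => if j ∈ T₁ then 1 / lam else pin j with hp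
      set μ : Fin n → ℚ := fun i => if i ∈ S₁ then lam else μin i with hμ
      have hpT : ∀ j ∈ T₁, p j = 1/lam := by
        intro j hj
        rw [hp]; dsimp only; rw [if_pos hj]
      have hpNT : ∀ j, j ∉ T₁ → p j = pin j := by
        intro j hj
        rw [hp]; dsimp only; rw [if_neg hj]
      have hpz : ∀ i j, p j * z i j = (1/lam) * z i j := by
        intro i j
        by_cases hzj : z i j = 0
        · rw [hzj, mul_zero, mul_zero]
        · have hjT : j ∈ T₁ := by
            by_contra h
            exact hzj (hz0T i j h)
          rw [hpT j hjT]
      have hpw : ∀ i j, p j * w i j = 0 := by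
        intro i j
        by_cases hwj : w i j = 0
        · rw [hwj, mul_zero]
        · obtain ⟨hiS, hjJ', hs⟩ := hw0 i j hwj
          have hjT : j ∉ T₁ := (Finset.mem_sdiff.mp hjJ').2
          have hcolin : ∑ i', xin i' j < 1 := by
            rw [hsfun] at hs
            dsimp only at hs
            linarith
          rw [hpNT j hjT, in8 j hjJ' hcolin, zero_mul]
      have hpxin : ∀ i j, p j * xin i j = pin j * xin i j := by
        intro i j
        by_cases hxj : xin i j = 0
        · rw [hxj, mul_zero, mul_zero]
        · have hjJ' : j ∈ J' := by
            by_contra h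
            exact hxj (in3 i j h)
          rw [hpNT j (Finset.mem_sdiff.mp hjJ').2]
      -- column sums
      have hcolT : ∀ j ∈ T₁, ∑ i, x i j = 1 := by
        intro j hj
        have h1 : ∀ i, x i j = z i j + w i j + xin i j := fun i => rfl
        rw [Finset.sum_congr rfl (fun i _ => h1 i), Finset.sum_add_distrib,
          Finset.sum_add_distrib]
        rw [hzcol j hj, hwcol0 j (hT₁J'2 j hj),
          Finset.sum_eq_zero (fun i _ => in3 i j (hT₁J'2 j hj))]
        ring
      have hcolJ' : ∀ j ∈ J', ∑ i, x i j
          = (1 - sfun j) + (m:ℚ) * ((1 - lam) * sfun j / F) := by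
        intro j hj
        have hjT : j ∉ T₁ := (Finset.mem_sdiff.mp hj).2
        have h1 : ∀ i, x i j = z i j + w i j + xin i j := fun i => rfl
        rw [Finset.sum_congr rfl (fun i _ => h1 i), Finset.sum_add_distrib,
          Finset.sum_add_distrib]
        rw [Finset.sum_eq_zero (fun i _ => hz0T i j hjT), hwcol j hj]
        have : ∑ i, xin i j = 1 - sfun j := by
          rw [hsfun]; dsimp only; ring
        rw [this]
        ring
      have hwcol_le : ∀ j ∈ J', (m:ℚ) * ((1 - lam) * sfun j / F) ≤ sfun j := by
        intro j hj
        have hs := hsnn j hj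
        have h1 : (m:ℚ) * (1 - lam) = (m:ℚ) - k := by
          rw [mul_sub, mul_one, mul_comm (m:ℚ) lam, hlamm]
        calc (m:ℚ) * ((1 - lam) * sfun j / F) = ((m:ℚ) * (1 - lam)) * (sfun j / F) := by ring
          _ ≤ F * (sfun j / F) := by
              apply mul_le_mul_of_nonneg_right _ (div_nonneg hs (le_of_lt hFpos))
              rw [h1]; exact hmkF
          _ = sfun j := by rw [mul_comm, div_mul_cancel₀ _ (ne_of_gt hFpos)]
      refine ⟨x, p, μ, ?_, ?_, ?_, ?_, ?_, ?_, ?_, ?_, ?_, ?_, ?_, ?_⟩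
      · -- nonneg
        intro i j
        have hxij : x i j = z i j + w i j + xin i j := rfl
        rw [hxij]
        have := in1 i j
        have := hznn i j
        have := hwnn i j
        linarith
      · -- rows off I
        intro i hi j
        have h1 : i ∉ S₁ := fun h => hi (hS₁I h)
        have h2 : i ∉ I' := fun h => hi (hI'sub h)
        have hxij : x i j = z i j + w i j + xin i j := rfl
        rw [hxij, hz0S i j h1, in2 i h2 j, hw0S i j h1]
        ring
      · -- cols off J
        intro i j hj
        have h1 : j ∉ T₁ := fun h => hj (hT₁J h)
        have h2 : j ∉ J' := fun h => hj (hJ'sub h)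
        have hxij : x i j = z i j + w i j + xin i j := rfl
        rw [hxij, hz0T i j h1, in3 i j h2, hw0J i j h2]
        ring
      · -- rows
        intro i hi
        have h1 : ∀ j, x i j = z i j + w i j + xin i j := fun j => rfl
        rw [Finset.sum_congr rfl (fun j _ => h1 j), Finset.sum_add_distrib,
          Finset.sum_add_distrib]
        by_cases hiS : i ∈ S₁
        · rw [hzrow i hiS, hwrow i hiS,
            Finset.sum_eq_zero (fun j _ => in2 i (hS₁I'2 i hiS) j)]
          ring
        · have hiI' : i ∈ I' := Finset.mem_sdiff.mpr ⟨hi, hiS⟩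
          rw [Finset.sum_eq_zero (fun j _ => hz0S i j hiS),
            Finset.sum_eq_zero (fun j _ => hw0S i j hiS), in4 i hiI']
          ring
      · -- cols ≤ 1
        intro j hj
        by_cases hjT : j ∈ T₁
        · rw [hcolT j hjT]
        · have hjJ' : j ∈ J' := Finset.mem_sdiff.mpr ⟨hj, hjT⟩
          rw [hcolJ' j hjJ']
          have := hwcol_le j hjJ'
          linarith
      · -- p nonneg
        intro j
        rw [hp]; dsimp only
        split
        · exact le_of_lt (one_div_pos.mpr hlam0)
        · exact in6 j
      · -- p off J
        intro j hj
        have h1 : j ∉ T₁ := fun h => hj (hT₁J h)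
        have h2 : j ∉ J' := fun h => hj (hJ'sub h)
        rw [hpNT j h1]
        exact in7 j h2
      · -- slack implies zero price
        intro j hj hlt
        by_cases hjT : j ∈ T₁
        · exfalso
          rw [hcolT j hjT] at hlt
          exact lt_irrefl 1 hlt
        · have hjJ' : j ∈ J' := Finset.mem_sdiff.mpr ⟨hj, hjT⟩
          rw [hpNT j hjT]
          apply in8 j hjJ'
          rcases lt_or_eq_of_le (hsnn j hjJ') with hs | hs
          · rw [hsfun] at hs
            dsimp only at hs
            linarith
          · exfalso
            rw [hcolJ' j hjJ', ← hs] at hlt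
            simp at hlt
      · -- μ properties and A-mass
        intro i hi
        by_cases hiS : i ∈ S₁
        · have hμi : μ i = lam := by rw [hμ]; dsimp only; rw [if_pos hiS]
          rw [hμi]
          refine ⟨hlam0, le_of_lt hlam1, ?_⟩
          have h1 : ∀ j, x i j = z i j + w i j + xin i j := fun j => rfl
          rw [Finset.sum_congr rfl (fun j _ => h1 j), Finset.sum_add_distrib,
            Finset.sum_add_distrib]
          have hza : ∑ j ∈ A i, z i j = lam := by
            rw [Finset.sum_subset (Finset.subset_univ (A i)) (fun j _ hj => hz0A i j hj)]
            exact hzrow i hiS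
          have hwa : ∑ j ∈ A i, w i j = 0 := by
            refine Finset.sum_eq_zero (fun j hj => ?_)
            by_cases hjJ' : j ∈ J'
            · exfalso
              exact hT₁J'2 j (hAT i hiS j hj (hJ'sub hjJ')) hjJ'
            · exact hw0J i j hjJ'
          have hxa : ∑ j ∈ A i, xin i j = 0 :=
            Finset.sum_eq_zero (fun j _ => in2 i (hS₁I'2 i hiS) j)
          rw [hza, hwa, hxa]
          ring
        · have hiI' : i ∈ I' := Finset.mem_sdiff.mpr ⟨hi, hiS⟩
          have hμi : μ i = μin i := by rw [hμ]; dsimp only; rw [if_neg hiS]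
          rw [hμi]
          obtain ⟨q1, q2, q3⟩ := in9 i hiI'
          refine ⟨q1, q2, ?_⟩
          have h1 : ∀ j, x i j = z i j + w i j + xin i j := fun j => rfl
          rw [Finset.sum_congr rfl (fun j _ => h1 j), Finset.sum_add_distrib,
            Finset.sum_add_distrib]
          rw [Finset.sum_eq_zero (fun j _ => hz0S i j hiS),
            Finset.sum_eq_zero (fun j _ => hw0S i j hiS), q3]
          ring
      · -- budget conditions for μ < 1
        intro i hi hμlt
        by_cases hiS : i ∈ S₁
        · have hμi : μ i = lam := by rw [hμ]; dsimp only; rw [if_pos hiS]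
          rw [hμi]
          constructor
          · intro j hj
            obtain ⟨hjA, hjJ⟩ := Finset.mem_inter.mp hj
            rw [hpT j (hAT i hiS j hjA hjJ)]
          · have h1 : ∀ j, p j * x i j = (1/lam) * z i j + pin j * xin i j := by
              intro j
              have hxij : x i j = z i j + w i j + xin i j := rfl
              rw [hxij, mul_add, mul_add, hpz i j, hpw i j, hpxin i j, add_zero]
            have hxa : ∑ j, pin j * xin i j = 0 :=
              Finset.sum_eq_zero (fun j _ => by rw [in2 i (hS₁I'2 i hiS) j, mul_zero])
            rw [Finset.sum_congr rfl (fun j _ => h1 j), Finset.sum_add_distrib,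
              ← Finset.mul_sum, hzrow i hiS, hxa, add_zero,
              one_div_mul_cancel (ne_of_gt hlam0)]
        · have hiI' : i ∈ I' := Finset.mem_sdiff.mpr ⟨hi, hiS⟩
          have hμi : μ i = μin i := by rw [hμ]; dsimp only; rw [if_neg hiS]
          rw [hμi] at hμlt ⊢
          obtain ⟨hpr, hcost⟩ := in10 i hiI' hμlt
          have hμpos : 0 < μin i := (in9 i hiI').1
          constructor
          · intro j hj
            obtain ⟨hjA, hjJ⟩ := Finset.mem_inter.mp hj
            by_cases hjT : j ∈ T₁
            · rw [hpT j hjT]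
              exact one_div_le_one_div_of_le hlam0 (hlamμ i hiI')
            · rw [hpNT j hjT]
              exact hpr j (Finset.mem_inter.mpr ⟨hjA, Finset.mem_sdiff.mpr ⟨hjJ, hjT⟩⟩)
          · have h1 : ∀ j, p j * x i j = pin j * xin i j := by
              intro j
              have hxij : x i j = z i j + w i j + xin i j := rfl
              rw [hxij, mul_add, mul_add, hz0S i j hiS, hw0S i j hiS, mul_zero,
                hpxin i j]
              ring
            rw [Finset.sum_congr rfl (fun j _ => h1 j)]
            exact hcost
      · -- zero cost for μ = 1
        intro i hi hμ1
        by_cases hiS : i ∈ S₁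
        · exfalso
          have hμi : μ i = lam := by rw [hμ]; dsimp only; rw [if_pos hiS]
          rw [hμi] at hμ1
          rw [hμ1] at hlam1
          exact lt_irrefl 1 hlam1
        · have hiI' : i ∈ I' := Finset.mem_sdiff.mpr ⟨hi, hiS⟩
          have hμi : μ i = μin i := by rw [hμ]; dsimp only; rw [if_neg hiS]
          rw [hμi] at hμ1
          have h1 : ∀ j, p j * x i j = pin j * xin i j := by
            intro j
            have hxij : x i j = z i j + w i j + xin i j := rfl
            rw [hxij, mul_add, mul_add, hz0S i j hiS, hw0S i j hiS, mul_zero,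
              hpxin i j]
            ring
          rw [Finset.sum_congr rfl (fun j _ => h1 j)]
          exact in11 i hiI' hμ1
      · -- the ratio witness
        intro i hi
        by_cases hiS : i ∈ S₁
        · have hμi : μ i = lam := by rw [hμ]; dsimp only; rw [if_pos hiS]
          refine Or.inr ⟨S₁, hS₁I, hS₁ne, ?_⟩
          rw [hμi, ← hT₁, ← hk, ← hm, hlamm]
        · have hiI' : i ∈ I' := Finset.mem_sdiff.mpr ⟨hi, hiS⟩
          have hμi : μ i = μin i := by rw [hμ]; dsimp only; rw [if_neg hiS]
          rcases in12 i hiI' with h1 | ⟨S', hS'I', hS'ne, hb⟩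
          · exact Or.inl (by rw [hμi]; exact h1)
          · obtain ⟨hcb, hcardu, hSu⟩ := hunion S' hS'I' hS'ne
            refine Or.inr ⟨S₁ ∪ S', hSu, Finset.Nonempty.mono Finset.subset_union_left hS₁ne, ?_⟩
            rw [hμi, hcardu]
            have hkμ : (k:ℚ) ≤ μin i * m := by
              rw [← hlamm]
              have hmpos : (0:ℚ) ≤ m := Nat.cast_nonneg m
              exact mul_le_mul_of_nonneg_right (hlamμ i hiI') hmpos
            calc (((S₁ ∪ S').biUnion A ∩ J).card : ℚ)
                ≤ (k:ℚ) + ((S'.biUnion A ∩ J').card : ℚ) := hcb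
              _ ≤ μin i * m + μin i * S'.card := add_le_add hkμ hb
              _ = μin i * ((m:ℚ) + S'.card) := by ring


end BuildMain


section Final

attribute [local instance] Classical.propDecidable

theorem hz_bivalued_rational' (n : ℕ) (u : Fin n → Fin n → ℝ)
    (α β : Fin n → ℚ)
    (hbi : BiValued n u (fun i => (α i : ℝ)) (fun i => (β i : ℝ)))
    (htop : ∀ i, ∃ j, u i j = (α i : ℝ)) :
    (∀ x y, IsHZ n u x → IsHZ n u y → ∀ i, util n u i (x i) = util n u i (y i)) ∧
    (∀ x, IsHZ n u x → ∀ i, ∃ q : ℚ, util n u i (x i) = (q : ℝ)) ∧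
    (∃ x, IsHZ n u x ∧ ∀ i j, ∃ q : ℚ, x i j = (q : ℝ)) := by
  set αr : Fin n → ℝ := fun i => (α i : ℝ) with hαr
  set βr : Fin n → ℝ := fun i => (β i : ℝ) with hβr
  have hAne : ∀ i ∈ (univ : Finset (Fin n)), (Aset n u αr i ∩ univ).Nonempty := by
    intro i _
    obtain ⟨j, hj⟩ := htop i
    exact ⟨j, Finset.mem_inter.mpr ⟨mem_Aset.mpr hj, Finset.mem_univ j⟩⟩
  obtain ⟨xq, pq, μq, b1, b2, b3, b4, b5, b6, b7, b8, b9, b10, b11, b12⟩ :=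
    build (Aset n u αr) n (univ : Finset (Fin n)) (univ : Finset (Fin n))
      (by rw [Finset.card_univ, Fintype.card_fin]) hAne (le_refl _)
  have hcol1 : ∀ j, ∑ i, xq i j = 1 := by
    have htot : ∑ j, ∑ i, xq i j = (n : ℚ) := by
      rw [Finset.sum_comm]
      rw [Finset.sum_congr rfl (fun i _ => b4 i (Finset.mem_univ i))]
      rw [Finset.sum_const, nsmul_eq_mul, mul_one, Finset.card_univ, Fintype.card_fin]
    by_contra hcon
    push_neg at hcon
    obtain ⟨j0, hj0⟩ := hcon
    have hj0' : ∑ i, xq i j0 < 1 := lt_of_le_of_ne (b5 j0 (Finset.mem_univ j0)) hj0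
    have hlt : ∑ j, ∑ i, xq i j < (n:ℚ) := by
      calc ∑ j, ∑ i, xq i j < ∑ _j : Fin n, (1:ℚ) :=
            Finset.sum_lt_sum (fun j _ => b5 j (Finset.mem_univ j))
              ⟨j0, Finset.mem_univ j0, hj0'⟩
        _ = (n:ℚ) := by
            rw [Finset.sum_const, nsmul_eq_mul, mul_one, Finset.card_univ, Fintype.card_fin]
    rw [htot] at hlt
    exact lt_irrefl _ hlt
  set x : Fin n → Fin n → ℝ := fun i j => ((xq i j : ℚ) : ℝ) with hxr
  set p : Fin n → ℝ := fun j => ((pq j : ℚ) : ℝ) with hpr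
  have hxnn : ∀ i j, (0:ℝ) ≤ x i j := by
    intro i j
    rw [hxr]; dsimp only
    exact_mod_cast b1 i j
  have hrow : ∀ i, ∑ j, x i j = 1 := by
    intro i
    rw [hxr]; dsimp only
    rw [← Rat.cast_sum]
    exact_mod_cast b4 i (Finset.mem_univ i)
  have hcol : ∀ j, ∑ i, x i j = 1 := by
    intro j
    rw [hxr]; dsimp only
    rw [← Rat.cast_sum]
    exact_mod_cast hcol1 j
  have hxle : ∀ i j, x i j ≤ 1 := by
    intro i j
    have h1 : xq i j ≤ ∑ i', xq i' j :=
      Finset.single_le_sum (fun i' _ => b1 i' j) (Finset.mem_univ i)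
    rw [hcol1 j] at h1
    rw [hxr]; dsimp only
    exact_mod_cast h1
  have hpnn : ∀ j, (0:ℝ) ≤ p j := by
    intro j
    rw [hpr]; dsimp only
    exact_mod_cast b6 j
  have hcostc : ∀ i, ∑ j, p j * x i j = ((∑ j, pq j * xq i j : ℚ) : ℝ) := by
    intro i
    rw [hxr, hpr]; dsimp only
    push_cast
    ring
  have hamass : ∀ i, ∑ j ∈ Aset n u αr i, x i j = ((μq i : ℚ) : ℝ) := by
    intro i
    obtain ⟨_, _, hμa⟩ := b9 i (Finset.mem_univ i)
    rw [hxr]; dsimp only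
    rw [← Rat.cast_sum]
    exact_mod_cast hμa
  have hμpos : ∀ i, (0:ℚ) < μq i := fun i => (b9 i (Finset.mem_univ i)).1
  have hμle : ∀ i, μq i ≤ 1 := fun i => (b9 i (Finset.mem_univ i)).2.1
  have hd : ∀ i, (0:ℝ) < αr i - βr i := by
    intro i
    have := (hbi i).2.1
    linarith
  have hprice : ∀ i, μq i < 1 → ∀ j ∈ Aset n u αr i, ((1 / μq i : ℚ) : ℝ) ≤ p j := by
    intro i hlt j hj
    have := (b10 i (Finset.mem_univ i) hlt).1 j
      (Finset.mem_inter.mpr ⟨hj, Finset.mem_univ j⟩)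
    rw [hpr]; dsimp only
    exact_mod_cast this
  have hHZ : IsHZWithPrices n u x p := by
    refine ⟨⟨fun i j => ⟨hxnn i j, hxle i j⟩, hcol⟩, hrow, hpnn, ?_⟩
    intro i
    have hμr0 : (0:ℝ) < ((μq i : ℚ) : ℝ) := by exact_mod_cast hμpos i
    have h5 : ((1/μq i : ℚ):ℝ) = 1 / ((μq i : ℚ):ℝ) := by push_cast; ring
    have hcostval : ∑ j, p j * x i j ≤ 1 := by
      rcases lt_or_eq_of_le (hμle i) with hlt | heq
      · rw [hcostc i, (b10 i (Finset.mem_univ i) hlt).2]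
        norm_num
      · rw [hcostc i, b11 i (Finset.mem_univ i) heq]
        norm_num
    have hmax : ∀ y, IsBalancedAlloc n y → ∑ j, p j * y j ≤ 1 →
        util n u i y ≤ util n u i (x i) := by
      intro y hy hyc
      rw [util_eq_aff hbi i y hy.2, util_eq_aff hbi i (x i) (hrow i), hamass i]
      have hSle : ∑ j ∈ Aset n u αr i, y j ≤ ((μq i : ℚ) : ℝ) := by
        rcases lt_or_eq_of_le (hμle i) with hlt | heq
        · have h2 : ∀ j ∈ Aset n u αr i, ((1/μq i : ℚ):ℝ) * y j ≤ p j * y j := fun j hj =>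
            mul_le_mul_of_nonneg_right (hprice i hlt j hj) (hy.1 j).1
          have h3 : ∑ j ∈ Aset n u αr i, p j * y j ≤ ∑ j, p j * y j :=
            Finset.sum_le_sum_of_subset_of_nonneg (Finset.subset_univ _)
              (fun j _ _ => mul_nonneg (hpnn j) (hy.1 j).1)
          have h4 : 1 / ((μq i : ℚ):ℝ) * ∑ j ∈ Aset n u αr i, y j ≤ 1 := by
            rw [Finset.mul_sum]
            calc ∑ j ∈ Aset n u αr i, 1 / ((μq i : ℚ):ℝ) * y j
                ≤ ∑ j ∈ Aset n u αr i, p j * y j := by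
                  refine Finset.sum_le_sum (fun j hj => ?_)
                  rw [← h5]
                  exact h2 j hj
              _ ≤ ∑ j, p j * y j := h3
              _ ≤ 1 := hyc
          rw [div_mul_eq_mul_div, div_le_one hμr0, one_mul] at h4
          exact h4
        · have heq' : ((μq i : ℚ):ℝ) = 1 := by exact_mod_cast heq
          rw [heq']
          calc ∑ j ∈ Aset n u αr i, y j
              ≤ ∑ j, y j := Finset.sum_le_sum_of_subset_of_nonneg (Finset.subset_univ _)
                (fun j _ _ => (hy.1 j).1)
            _ = 1 := hy.2
      have := mul_le_mul_of_nonneg_left hSle (le_of_lt (hd i))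
      linarith
    have hmin : ∀ y, IsBalancedAlloc n y → util n u i (x i) ≤ util n u i y →
        ∑ j, p j * x i j ≤ ∑ j, p j * y j := by
      intro y hy hyu
      rcases lt_or_eq_of_le (hμle i) with hlt | heq
      · rw [hcostc i, (b10 i (Finset.mem_univ i) hlt).2]
        rw [util_eq_aff hbi i y hy.2, util_eq_aff hbi i (x i) (hrow i), hamass i] at hyu
        have hSy : ((μq i : ℚ):ℝ) ≤ ∑ j ∈ Aset n u αr i, y j := by
          have h0 : (αr i - βr i) * ((μq i : ℚ):ℝ)
              ≤ (αr i - βr i) * ∑ j ∈ Aset n u αr i, y j := by linarith [hyu]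
          exact (mul_le_mul_iff_right₀ (hd i)).mp h0
        have h2 : ∀ j ∈ Aset n u αr i, ((1/μq i : ℚ):ℝ) * y j ≤ p j * y j := fun j hj =>
          mul_le_mul_of_nonneg_right (hprice i hlt j hj) (hy.1 j).1
        have h3 : ∑ j ∈ Aset n u αr i, p j * y j ≤ ∑ j, p j * y j :=
          Finset.sum_le_sum_of_subset_of_nonneg (Finset.subset_univ _)
            (fun j _ _ => mul_nonneg (hpnn j) (hy.1 j).1)
        have h4 : (1:ℝ) ≤ 1 / ((μq i : ℚ):ℝ) * ∑ j ∈ Aset n u αr i, y j := by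
          rw [div_mul_eq_mul_div, le_div_iff₀ hμr0, one_mul, one_mul]
          exact hSy
        push_cast
        calc (1:ℝ) ≤ 1 / ((μq i : ℚ):ℝ) * ∑ j ∈ Aset n u αr i, y j := h4
          _ = ∑ j ∈ Aset n u αr i, 1 / ((μq i : ℚ):ℝ) * y j := by rw [Finset.mul_sum]
          _ ≤ ∑ j ∈ Aset n u αr i, p j * y j := by
              refine Finset.sum_le_sum (fun j hj => ?_)
              rw [← h5]
              exact h2 j hj
          _ ≤ ∑ j, p j * y j := h3
      · rw [hcostc i, b11 i (Finset.mem_univ i) heq]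
        push_cast
        exact Finset.sum_nonneg (fun j _ => mul_nonneg (hpnn j) (hy.1 j).1)
    exact ⟨hcostval, hmax, hmin⟩
  refine ⟨?_, ?_, ?_⟩
  · intro x' y' hx' hy' i
    exact hz_util_unique hbi htop hx' hy' i
  · intro x' hx' i
    refine ⟨β i + (α i - β i) * μq i, ?_⟩
    have h1 := hz_util_unique hbi htop hx' ⟨p, hHZ⟩ i
    rw [h1, util_eq_aff hbi i (x i) (hrow i), hamass i, hαr, hβr]
    dsimp only
    push_cast
    ring
  · exact ⟨x, ⟨p, hHZ⟩, fun i j => ⟨xq i j, rfl⟩⟩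

end Final

/-- For bi-valued utilities with rational values `α i > β i ≥ 0` (each
agent valuing some item at `α i`): each agent gets the same utility in all HZ
solutions, that common utility is rational, and some HZ solution has all entries
rational. -/
theorem hz_bivalued_rational (n : ℕ) (u : Fin n → Fin n → ℝ)
    (α β : Fin n → ℚ)
    (hbi : BiValued n u (fun i => (α i : ℝ)) (fun i => (β i : ℝ)))
    (htop : ∀ i, ∃ j, u i j = (α i : ℝ)) :
    (∀ x y, IsHZ n u x → IsHZ n u y → ∀ i, util n u i (x i) = util n u i (y i)) ∧
    (∀ x, IsHZ n u x → ∀ i, ∃ q : ℚ, util n u i (x i) = (q : ℝ)) ∧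
    (∃ x, IsHZ n u x ∧ ∀ i j, ∃ q : ℚ, x i j = (q : ℝ)) :=
  hz_bivalued_rational' n u α β hbi htop
end

section
/- Under bi-valued utilities, the set of HZ solutions is invariant under positive affine transformations of each agent's utilities: let u be bi-valued utilities in which each agent i values at least one item at α_i, and let u'_{ij} = c_i · u_{ij} + b_i for reals c_i > 0 and b_i with c_i β_i + b_i ≥ 0. Then a balanced fractional assignment x is an HZ solution for u if and only if x is an HZ solution for u'. -/
open Finset

/-- Under bi-valued utilities, the set of HZ solutions is invariant
under positive affine transformations of each agent's utilities. -/
theorem hz_bivalued_affine_invariant (n : ℕ) (u : Fin n → Fin n → ℝ)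
    (α β : Fin n → ℝ) (hbi : BiValued n u α β)
    (htop : ∀ i, ∃ j, u i j = α i)
    (c b : Fin n → ℝ) (hc : ∀ i, 0 < c i) (hb : ∀ i, 0 ≤ c i * β i + b i)
    (u' : Fin n → Fin n → ℝ)
    (hu' : ∀ i j, u' i j = c i * u i j + b i)
    (x : Fin n → Fin n → ℝ) :
    IsHZ n u x ↔ IsHZ n u' x := by
  have key : ∀ i (y : Fin n → ℝ), ∑ j, y j = 1 →
      util n u' i y = c i * util n u i y + b i := by
    intro i y hy
    simp only [util, hu']
    have : ∑ j, (c i * u i j + b i) * y j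
        = ∑ j, (c i * (u i j * y j) + b i * y j) := by
      apply Finset.sum_congr rfl; intros; ring
    rw [this, Finset.sum_add_distrib, ← Finset.mul_sum, ← Finset.mul_sum, hy, mul_one]
  constructor
  · rintro ⟨p, hfa, hbal, hp, h⟩
    refine ⟨p, hfa, hbal, hp, fun i => ?_⟩
    obtain ⟨h1, h2, h3⟩ := h i
    have hxi : ∑ j, x i j = 1 := hbal i
    refine ⟨h1, fun y hy hby => ?_, fun y hy huy => ?_⟩
    · rw [key i y hy.2, key i (x i) hxi]
      have := h2 y hy hby
      nlinarith [hc i]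
    · apply h3 y hy
      rw [key i y hy.2, key i (x i) hxi] at huy
      nlinarith [hc i]
  · rintro ⟨p, hfa, hbal, hp, h⟩
    refine ⟨p, hfa, hbal, hp, fun i => ?_⟩
    obtain ⟨h1, h2, h3⟩ := h i
    have hxi : ∑ j, x i j = 1 := hbal i
    refine ⟨h1, fun y hy hby => ?_, fun y hy huy => ?_⟩
    · have := h2 y hy hby
      rw [key i y hy.2, key i (x i) hxi] at this
      nlinarith [hc i]
    · apply h3 y hy
      rw [key i y hy.2, key i (x i) hxi]
      nlinarith [hc i]
end

section
/- The MNW (equivalently CEEI) rule is not strategyproof under bi-valued utilities, even when the misreport preserves the agent's ordinal preferences: there exist an assignment problem with bi-valued utilities u, an agent i, and a bi-valued utility matrix u' differing from u only in row i and satisfying (u_{ij} > u_{ik} ⟺ u'_{ij} > u'_{ik}) for all items j, k, such that for every fractional assignment x maximizing ∏_a Σ_j u_{aj} x_{aj} over fractional assignments and every fractional assignment y maximizing ∏_a Σ_j u'_{aj} y_{aj} over fractional assignments, we have Σ_j u_{ij} y_{ij} > Σ_j u_{ij} x_{ij}. -/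
open Finset

/-- `x` maximizes Nash welfare for utilities `u` over all fractional assignments. -/
def IsMNW (n : ℕ) (u x : Fin n → Fin n → ℝ) : Prop :=
  IsFracAssign n x ∧
  ∀ y, IsFracAssign n y → ∏ i, util n u i (y i) ≤ ∏ i, util n u i (x i)

lemma truth_bound (s t r a b : ℝ) (hs0 : 0 ≤ s)
    (ht0 : 0 ≤ t) (ht1 : t ≤ 1) (hr0 : 0 ≤ r) (hr1 : r ≤ 1)
    (ha : 0 ≤ a) (hb : 0 ≤ b) (hsum : s + a + b = 1)
    (hP : 1372/675 ≤ (5*s+t+r) * (2*a) * (2*b)) : 5*s+t+r ≤ 7/3 := by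
  have hs1 : s ≤ 1 := by linarith
  have hW0 : (0:ℝ) ≤ 5*s+t+r := by linarith
  have hab : (2*a)*(2*b) ≤ (1-s)^2 := by nlinarith [sq_nonneg (a-b)]
  have h1 : 1372/675 ≤ (5*s+t+r) * (1-s)^2 := by nlinarith [mul_le_mul_of_nonneg_left hab hW0]
  have h2 : 1372/675 ≤ (5*s+2) * (1-s)^2 := by nlinarith [sq_nonneg (1-s)]
  have h5 : s = 1/15 := by nlinarith [sq_nonneg (s - 1/15)]
  linarith

lemma lie_bound (s t r a b : ℝ) (hs0 : 0 ≤ s)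
    (ht0 : 0 ≤ t) (ht1 : t ≤ 1) (hr0 : 0 ≤ r) (hr1 : r ≤ 1)
    (ha : 0 ≤ a) (hb : 0 ≤ b) (hsum : s + a + b = 1)
    (hP : 2662/675 ≤ (20*s+t+r) * (2*a) * (2*b)) : 10/3 ≤ 5*s+t+r := by
  have hs1 : s ≤ 1 := by linarith
  have hW0 : (0:ℝ) ≤ 20*s+t+r := by linarith
  have hab : (2*a)*(2*b) ≤ (1-s)^2 := by nlinarith [sq_nonneg (a-b)]
  have h1 : 2662/675 ≤ (20*s+t+r) * (1-s)^2 := by nlinarith [mul_le_mul_of_nonneg_left hab hW0]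
  have h2 : 2662/675 ≤ (20*s+2) * (1-s)^2 := by nlinarith [sq_nonneg (1-s)]
  have h5 : s = 4/15 := by nlinarith [sq_nonneg (s - 4/15)]
  subst h5
  nlinarith

/-- The MNW (equivalently CEEI) rule is not strategyproof under
bi-valued utilities, even when the misreport preserves the agent's ordinal
preferences. -/
theorem mnw_not_strategyproof_bivalued :
    ∃ (n : ℕ) (u : Fin n → Fin n → ℝ) (α β : Fin n → ℝ) (i : Fin n)
      (u' : Fin n → Fin n → ℝ) (α' β' : Fin n → ℝ),
      BiValued n u α β ∧
      (∀ a, ∃ j, 0 < u a j) ∧ (∀ j, ∃ a, 0 < u a j) ∧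
      BiValued n u' α' β' ∧
      (∀ a, a ≠ i → ∀ j, u' a j = u a j) ∧
      (∀ j k, u i k < u i j ↔ u' i k < u' i j) ∧
      ∀ x y, IsMNW n u x → IsMNW n u' y →
        util n u i (x i) < util n u i (y i) := by
  refine ⟨3, ![![5,1,1],![2,0,0],![2,0,0]], ![5,2,2], ![1,0,0], 0,
          ![![20,1,1],![2,0,0],![2,0,0]], ![20,2,2], ![1,0,0], ?_, ?_, ?_, ?_, ?_, ?_, ?_⟩
  · intro i
    fin_cases i <;> refine ⟨by norm_num, by norm_num, fun j => ?_⟩ <;> fin_cases j <;> norm_num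
  · intro a
    fin_cases a <;> exact ⟨0, by norm_num⟩
  · intro j
    fin_cases j
    · exact ⟨0, by norm_num⟩
    · exact ⟨0, by norm_num⟩
    · exact ⟨0, by norm_num⟩
  · intro i
    fin_cases i <;> refine ⟨by norm_num, by norm_num, fun j => ?_⟩ <;> fin_cases j <;> norm_num
  · intro a ha j
    fin_cases a
    · exact absurd rfl ha
    · fin_cases j <;> norm_num
    · fin_cases j <;> norm_num
  · intro j k
    fin_cases j <;> fin_cases k <;> norm_num
  · intro x y hx hy
    -- witness for truth instance
    have hxw : IsFracAssign 3 ![![1/15,1,1],![7/15,0,0],![7/15,0,0]] := by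
      constructor
      · intro i j; fin_cases i <;> fin_cases j <;> norm_num
      · intro j; fin_cases j <;> · simp [Fin.sum_univ_three, Matrix.vecHead, Matrix.vecTail]; try norm_num
    have hyw : IsFracAssign 3 ![![4/15,1,1],![11/30,0,0],![11/30,0,0]] := by
      constructor
      · intro i j; fin_cases i <;> fin_cases j <;> norm_num
      · intro j; fin_cases j <;> · simp [Fin.sum_univ_three, Matrix.vecHead, Matrix.vecTail]; try norm_num
    have hPx := hx.2 _ hxw
    have hPy := hy.2 _ hyw
    simp only [util, Fin.prod_univ_three, Fin.sum_univ_three, Matrix.cons_val_zero, Matrix.cons_val_one, Matrix.head_cons, Matrix.cons_val_two, Matrix.tail_cons, Matrix.vecHead, Matrix.vecTail, Function.comp_apply, Fin.succ_zero_eq_one, Fin.succ_one_eq_two] at hPx hPy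
    norm_num at hPx hPy
    -- bounds on entries of x, y
    have hxb := hx.1.1
    have hyb := hy.1.1
    have hxc := hx.1.2 0
    have hyc := hy.1.2 0
    simp only [Fin.sum_univ_three] at hxc hyc
    have h1 : 5 * x 0 0 + x 0 1 + x 0 2 ≤ 7/3 := by
      refine truth_bound _ _ _ (x 1 0) (x 2 0) (hxb 0 0).1 (hxb 0 1).1 (hxb 0 1).2
        (hxb 0 2).1 (hxb 0 2).2 (hxb 1 0).1 (hxb 2 0).1 hxc ?_
      nlinarith [hPx]
    have h2 : 10/3 ≤ 5 * y 0 0 + y 0 1 + y 0 2 := by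
      refine lie_bound _ _ _ (y 1 0) (y 2 0) (hyb 0 0).1 (hyb 0 1).1 (hyb 0 1).2
        (hyb 0 2).1 (hyb 0 2).2 (hyb 1 0).1 (hyb 2 0).1 hyc ?_
      nlinarith [hPy]
    simp only [util, Fin.sum_univ_three, Matrix.cons_val]
    norm_num
    linarith
end

section
/- For the 5-agent, 5-item utility matrix u with rows u_1 = (10,1,1,1,1), u_2 = (6,6,10,6,6), u_3 = (4,10,4,10,4), u_4 = (0,0,0,0,1), u_5 = (0,0,0,0,1), the fractional assignment x with rows x_1 = (1,0,0,0,0), x_2 = (0,1/12,1,1/12,0), x_3 = (0,11/12,0,11/12,0), x_4 = (0,0,0,0,1/2), x_5 = (0,0,0,0,1/2) is a global maximizer of the Nash welfare ∏_{i=1}^{5} Σ_j u_{ij} y_{ij} over all fractional assignments y. -/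
open Finset

lemma amgm2 (a b : ℝ) (ha : 0 ≤ a) (hb : 0 ≤ b) : a * b ≤ ((a + b) / 2) ^ 2 := by
  nlinarith [sq_nonneg (a - b)]

lemma amgm4 (a b c d : ℝ) (ha : 0 ≤ a) (hb : 0 ≤ b) (hc : 0 ≤ c) (hd : 0 ≤ d) :
    a * b * c * d ≤ ((a + b + c + d) / 4) ^ 4 := by
  have h1 := amgm2 a b ha hb
  have h2 := amgm2 c d hc hd
  have h3 : ((a + b) / 2) ^ 2 * ((c + d) / 2) ^ 2 ≤ ((a + b + c + d) / 4) ^ 4 := by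
    nlinarith [mul_nonneg (sq_nonneg ((a + b) / 2 - (c + d) / 2))
      (by positivity : (0:ℝ) ≤ ((a + b) / 2 + (c + d) / 2) ^ 2 / 4 + ((a+b)/2) * ((c+d)/2))]
  calc a * b * c * d = (a * b) * (c * d) := by ring
    _ ≤ ((a + b) / 2) ^ 2 * ((c + d) / 2) ^ 2 :=
        mul_le_mul h1 h2 (mul_nonneg hc hd) (sq_nonneg _)
    _ ≤ ((a + b + c + d) / 4) ^ 4 := h3

lemma amgm5 (a b c d e : ℝ) (ha : 0 ≤ a) (hb : 0 ≤ b) (hc : 0 ≤ c) (hd : 0 ≤ d)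
    (he : 0 ≤ e) (h : a + b + c + d + e ≤ 5) : a * b * c * d * e ≤ 1 := by
  set T : ℝ := (a + b + c + d) / 4 with hT
  have hT0 : 0 ≤ T := by positivity
  have h4 : a * b * c * d ≤ T ^ 4 := amgm4 a b c d ha hb hc hd
  have h5 : a * b * c * d * e ≤ T ^ 4 * e := mul_le_mul_of_nonneg_right h4 he
  have h6 : T ^ 4 * e ≤ 1 := by
    nlinarith [mul_nonneg (sq_nonneg (T - 1))
      (by positivity : (0:ℝ) ≤ 4 * T ^ 3 + 3 * T ^ 2 + 2 * T + 1), pow_nonneg hT0 4]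
  linarith

/-- For the given 5×5 utility matrix, the given fractional
assignment `x` is a global maximizer of Nash welfare over all fractional
assignments. -/
theorem mnw_truthful_example :
    let u : Fin 5 → Fin 5 → ℝ :=
      ![![10, 1, 1, 1, 1],
        ![6, 6, 10, 6, 6],
        ![4, 10, 4, 10, 4],
        ![0, 0, 0, 0, 1],
        ![0, 0, 0, 0, 1]]
    let x : Fin 5 → Fin 5 → ℝ :=
      ![![1, 0, 0, 0, 0],
        ![0, 1/12, 1, 1/12, 0],
        ![0, 11/12, 0, 11/12, 0],
        ![0, 0, 0, 0, 1/2],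
        ![0, 0, 0, 0, 1/2]]
    IsFracAssign 5 x ∧
      ∀ y, IsFracAssign 5 y → ∏ i, util 5 u i (y i) ≤ ∏ i, util 5 u i (x i) := by
  intro u x
  have hx : ∏ i, util 5 u i (x i) = 3025 / 6 := by
    simp only [util, Fin.prod_univ_five, Fin.sum_univ_five, u, x, Matrix.cons_val_zero, Matrix.cons_val_one, Matrix.cons_val_two, Matrix.cons_val_three, Matrix.cons_val_four, Matrix.head_cons, Matrix.tail_cons]
    norm_num
  constructor
  · constructor
    · intro i j
      fin_cases i <;> fin_cases j <;> simp only [x, Matrix.cons_val_zero, Matrix.cons_val_one, Matrix.cons_val_two, Matrix.cons_val_three, Matrix.cons_val_four, Matrix.head_cons, Matrix.tail_cons] <;> norm_num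
    · intro j
      fin_cases j <;> simp only [x, Fin.sum_univ_five, Matrix.cons_val_zero, Matrix.cons_val_one, Matrix.cons_val_two, Matrix.cons_val_three, Matrix.cons_val_four, Matrix.head_cons, Matrix.tail_cons] <;> norm_num
  · rintro y ⟨hy01, hycol⟩
    have hn : ∀ i j, 0 ≤ y i j := fun i j => (hy01 i j).1
    have hc0 := hycol 0; have hc1 := hycol 1; have hc2 := hycol 2
    have hc3 := hycol 3; have hc4 := hycol 4
    simp only [Fin.sum_univ_five] at hc0 hc1 hc2 hc3 hc4
    have ha : util 5 u 0 (y 0) = 10 * y 0 0 + y 0 1 + y 0 2 + y 0 3 + y 0 4 := by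
      simp only [util, Fin.sum_univ_five, u, Matrix.cons_val_zero, Matrix.cons_val_one, Matrix.cons_val_two, Matrix.cons_val_three, Matrix.cons_val_four, Matrix.head_cons, Matrix.tail_cons]; ring
    have hb : util 5 u 1 (y 1) = 6 * y 1 0 + 6 * y 1 1 + 10 * y 1 2 + 6 * y 1 3 + 6 * y 1 4 := by
      simp only [util, Fin.sum_univ_five, u, Matrix.cons_val_zero, Matrix.cons_val_one, Matrix.cons_val_two, Matrix.cons_val_three, Matrix.cons_val_four, Matrix.head_cons, Matrix.tail_cons]
    have hcu : util 5 u 2 (y 2) = 4 * y 2 0 + 10 * y 2 1 + 4 * y 2 2 + 10 * y 2 3 + 4 * y 2 4 := by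
      simp only [util, Fin.sum_univ_five, u, Matrix.cons_val_zero, Matrix.cons_val_one, Matrix.cons_val_two, Matrix.cons_val_three, Matrix.cons_val_four, Matrix.head_cons, Matrix.tail_cons]
    have hd : util 5 u 3 (y 3) = y 3 4 := by
      simp only [util, Fin.sum_univ_five, u, Matrix.cons_val_zero, Matrix.cons_val_one, Matrix.cons_val_two, Matrix.cons_val_three, Matrix.cons_val_four, Matrix.head_cons, Matrix.tail_cons]; ring
    have he : util 5 u 4 (y 4) = y 4 4 := by
      simp only [util, Fin.sum_univ_five, u, Matrix.cons_val_zero, Matrix.cons_val_one, Matrix.cons_val_two, Matrix.cons_val_three, Matrix.cons_val_four, Matrix.head_cons, Matrix.tail_cons]; ring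
    set A := util 5 u 0 (y 0)
    set B := util 5 u 1 (y 1)
    set C := util 5 u 2 (y 2)
    set D := util 5 u 3 (y 3)
    set E := util 5 u 4 (y 4)
    have hA0 : 0 ≤ A := by rw [ha]; have := hn 0 0; have := hn 0 1; have := hn 0 2; have := hn 0 3; have := hn 0 4; linarith
    have hB0 : 0 ≤ B := by rw [hb]; have := hn 1 0; have := hn 1 1; have := hn 1 2; have := hn 1 3; have := hn 1 4; linarith
    have hC0 : 0 ≤ C := by rw [hcu]; have := hn 2 0; have := hn 2 1; have := hn 2 2; have := hn 2 3; have := hn 2 4; linarith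
    have hD0 : 0 ≤ D := by rw [hd]; exact hn 3 4
    have hE0 : 0 ≤ E := by rw [he]; exact hn 4 4
    have hsum : A / 10 + B / 11 + 3 * C / 55 + 2 * D + 2 * E ≤ 5 := by
      rw [ha, hb, hcu, hd, he]
      have h00 := hn 0 0; have h01 := hn 0 1; have h02 := hn 0 2; have h03 := hn 0 3; have h04 := hn 0 4
      have h10 := hn 1 0; have h11 := hn 1 1; have h12 := hn 1 2; have h13 := hn 1 3; have h14 := hn 1 4
      have h20 := hn 2 0; have h21 := hn 2 1; have h22 := hn 2 2; have h23 := hn 2 3; have h24 := hn 2 4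
      have h30 := hn 3 0; have h31 := hn 3 1; have h32 := hn 3 2; have h33 := hn 3 3; have h34 := hn 3 4
      have h40 := hn 4 0; have h41 := hn 4 1; have h42 := hn 4 2; have h43 := hn 4 3; have h44 := hn 4 4
      linarith
    have key : (A / 10) * (B / 11) * (3 * C / 55) * (2 * D) * (2 * E) ≤ 1 :=
      amgm5 _ _ _ _ _ (by positivity) (by positivity) (by positivity) (by positivity)
        (by positivity) hsum
    have : A * B * C * D * E ≤ 3025 / 6 := by nlinarith [key]
    calc ∏ i, util 5 u i (y i) = A * B * C * D * E := by
          rw [Fin.prod_univ_five]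
      _ ≤ 3025 / 6 := this
      _ = ∏ i, util 5 u i (x i) := hx.symm
end

section
/- For the 5-agent, 5-item utility matrix u' with rows u'_1 = (10,8,8,8,8), u'_2 = (6,6,10,6,6), u'_3 = (4,10,4,10,4), u'_4 = (0,0,0,0,1), u'_5 = (0,0,0,0,1), the fractional assignment y with rows y_1 = (1,3/16,0,3/16,0), y_2 = (0,0,1,0,0), y_3 = (0,13/16,0,13/16,0), y_4 = (0,0,0,0,1/2), y_5 = (0,0,0,0,1/2) is a global maximizer of the Nash welfare ∏_{i=1}^{5} Σ_j u'_{ij} z_{ij} over all fractional assignments z. -/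
open Finset

lemma prod5_le_one (a b c d e : ℝ) (ha : 0 ≤ a) (hb : 0 ≤ b) (hc : 0 ≤ c)
    (hd : 0 ≤ d) (he : 0 ≤ e) (hsum : a + b + c + d + e ≤ 5) :
    a * b * c * d * e ≤ 1 := by
  set s : ℝ := (a + b + c + d) / 2 with hs_def
  have hs : 0 ≤ s := by positivity
  have h1 : a * b ≤ ((a+b)/2)^2 := by nlinarith [sq_nonneg (a - b)]
  have h2 : c * d ≤ ((c+d)/2)^2 := by nlinarith [sq_nonneg (c - d)]
  have h3 : ((a+b)/2) * ((c+d)/2) ≤ (s/2)^2 := by nlinarith [sq_nonneg ((a+b)/2 - (c+d)/2)]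
  have h4 : a * b * (c * d) ≤ ((a+b)/2)^2 * ((c+d)/2)^2 := by
    apply mul_le_mul h1 h2 (by positivity) (by positivity)
  have h5 : ((a+b)/2)^2 * ((c+d)/2)^2 ≤ (s/2)^4 := by
    have : ((a+b)/2)^2 * ((c+d)/2)^2 = (((a+b)/2) * ((c+d)/2))^2 := by ring
    rw [this]
    calc (((a+b)/2) * ((c+d)/2))^2 ≤ ((s/2)^2)^2 := by
          apply pow_le_pow_left₀ (by positivity) h3
      _ = (s/2)^4 := by ring
  have h6 : a * b * c * d * e ≤ (s/2)^4 * e := by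
    have h7 : a * b * c * d ≤ (s/2)^4 := by nlinarith [h4, h5]
    exact mul_le_mul_of_nonneg_right h7 he
  have he' : e ≤ 5 - 2 * s := by linarith [hsum]
  have hfinal : (s/2)^4 * e ≤ 1 := by
    have hcubic : 0 ≤ 2*s^3 + 3*s^2 + 4*s + 4 := by positivity
    have hkey : s^4 * (5 - 2*s) ≤ 16 := by
      nlinarith [mul_nonneg (sq_nonneg (s - 2)) hcubic]
    have hse : s^4 * e ≤ s^4 * (5 - 2*s) :=
      mul_le_mul_of_nonneg_left he' (by positivity)
    nlinarith [hse, hkey]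
  linarith [h6, hfinal]

/-- For the given 5×5 (misreported) utility matrix, the given
fractional assignment `y` is a global maximizer of Nash welfare over all
fractional assignments. -/
theorem mnw_misreport_example :
    let u' : Fin 5 → Fin 5 → ℝ :=
      ![![10, 8, 8, 8, 8],
        ![6, 6, 10, 6, 6],
        ![4, 10, 4, 10, 4],
        ![0, 0, 0, 0, 1],
        ![0, 0, 0, 0, 1]]
    let y : Fin 5 → Fin 5 → ℝ :=
      ![![1, 3/16, 0, 3/16, 0],
        ![0, 0, 1, 0, 0],
        ![0, 13/16, 0, 13/16, 0],
        ![0, 0, 0, 0, 1/2],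
        ![0, 0, 0, 0, 1/2]]
    IsFracAssign 5 y ∧
      ∀ z, IsFracAssign 5 z → ∏ i, util 5 u' i (z i) ≤ ∏ i, util 5 u' i (y i) := by
  intro u' y
  constructor
  · constructor
    · intro i j
      fin_cases i <;> fin_cases j <;> norm_num [y]
    · intro j
      fin_cases j <;> norm_num [y, Fin.sum_univ_five, Matrix.cons_val_zero, Matrix.cons_val_one, Matrix.cons_val_two, Matrix.cons_val_three, Matrix.cons_val_four, Matrix.head_cons, Matrix.cons_val_succ, Matrix.vecHead, Matrix.vecTail, Function.comp]
  · intro z hz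
    obtain ⟨hz01, hzcol⟩ := hz
    -- column sum equations
    have c0 := hzcol 0
    have c1 := hzcol 1
    have c2 := hzcol 2
    have c3 := hzcol 3
    have c4 := hzcol 4
    simp only [Fin.sum_univ_five] at c0 c1 c2 c3 c4
    -- utilities, expanded
    have hu0 : util 5 u' 0 (z 0) = 10 * z 0 0 + 8 * z 0 1 + 8 * z 0 2 + 8 * z 0 3 + 8 * z 0 4 := by
      simp [util, u', Fin.sum_univ_five, Matrix.cons_val_zero, Matrix.cons_val_one, Matrix.head_cons, Matrix.cons_val_succ, Matrix.vecHead, Matrix.vecTail, Function.comp]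
    have hu1 : util 5 u' 1 (z 1) = 6 * z 1 0 + 6 * z 1 1 + 10 * z 1 2 + 6 * z 1 3 + 6 * z 1 4 := by
      simp [util, u', Fin.sum_univ_five, Matrix.cons_val_zero, Matrix.cons_val_one, Matrix.head_cons, Matrix.cons_val_succ, Matrix.vecHead, Matrix.vecTail, Function.comp]
    have hu2 : util 5 u' 2 (z 2) = 4 * z 2 0 + 10 * z 2 1 + 4 * z 2 2 + 10 * z 2 3 + 4 * z 2 4 := by
      simp [util, u', Fin.sum_univ_five, Matrix.cons_val_zero, Matrix.cons_val_one, Matrix.head_cons, Matrix.cons_val_succ, Matrix.vecHead, Matrix.vecTail, Function.comp]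
    have hu3 : util 5 u' 3 (z 3) = z 3 4 := by
      simp [util, u', Fin.sum_univ_five, Matrix.cons_val_zero, Matrix.cons_val_one, Matrix.head_cons, Matrix.cons_val_succ, Matrix.vecHead, Matrix.vecTail, Function.comp]
    have hu4 : util 5 u' 4 (z 4) = z 4 4 := by
      simp [util, u', Fin.sum_univ_five, Matrix.cons_val_zero, Matrix.cons_val_one, Matrix.head_cons, Matrix.cons_val_succ, Matrix.vecHead, Matrix.vecTail, Function.comp]
    have hnn : ∀ i j : Fin 5, 0 ≤ z i j := fun i j => (hz01 i j).1
    set a : ℝ := util 5 u' 0 (z 0) / 13 with ha_def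
    set b : ℝ := util 5 u' 1 (z 1) / 10 with hb_def
    set c : ℝ := util 5 u' 2 (z 2) * 4 / 65 with hc_def
    set d : ℝ := 2 * util 5 u' 3 (z 3) with hd_def
    set e : ℝ := 2 * util 5 u' 4 (z 4) with he_def
    have ha : 0 ≤ a := by
      rw [ha_def, hu0]
      have := hnn 0 0; have := hnn 0 1; have := hnn 0 2; have := hnn 0 3; have := hnn 0 4
      positivity
    have hb : 0 ≤ b := by
      rw [hb_def, hu1]
      have := hnn 1 0; have := hnn 1 1; have := hnn 1 2; have := hnn 1 3; have := hnn 1 4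
      positivity
    have hc : 0 ≤ c := by
      rw [hc_def, hu2]
      have := hnn 2 0; have := hnn 2 1; have := hnn 2 2; have := hnn 2 3; have := hnn 2 4
      positivity
    have hd : 0 ≤ d := by
      rw [hd_def, hu3]; have := hnn 3 4; positivity
    have he : 0 ≤ e := by
      rw [he_def, hu4]; have := hnn 4 4; positivity
    have hsum : a + b + c + d + e ≤ 5 := by
      rw [ha_def, hb_def, hc_def, hd_def, he_def, hu0, hu1, hu2, hu3, hu4]
      have h00 := hnn 0 0; have h01 := hnn 0 1; have h02 := hnn 0 2
      have h03 := hnn 0 3; have h04 := hnn 0 4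
      have h10 := hnn 1 0; have h11 := hnn 1 1; have h12 := hnn 1 2
      have h13 := hnn 1 3; have h14 := hnn 1 4
      have h20 := hnn 2 0; have h21 := hnn 2 1; have h22 := hnn 2 2
      have h23 := hnn 2 3; have h24 := hnn 2 4
      have h30 := hnn 3 0; have h31 := hnn 3 1; have h32 := hnn 3 2
      have h33 := hnn 3 3; have h34 := hnn 3 4
      have h40 := hnn 4 0; have h41 := hnn 4 1; have h42 := hnn 4 2
      have h43 := hnn 4 3; have h44 := hnn 4 4
      linarith
    have hprod := prod5_le_one a b c d e ha hb hc hd he hsum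
    have hrhs : ∏ i, util 5 u' i (y i) = 4225 / 8 := by
      simp [util, u', y, Fin.prod_univ_five, Fin.sum_univ_five, Matrix.cons_val_zero, Matrix.cons_val_one, Matrix.head_cons, Matrix.cons_val_succ, Matrix.vecHead, Matrix.vecTail, Function.comp]
      norm_num
    rw [hrhs, Fin.prod_univ_five]
    have heq : util 5 u' 0 (z 0) * util 5 u' 1 (z 1) * util 5 u' 2 (z 2) *
        util 5 u' 3 (z 3) * util 5 u' 4 (z 4) = 4225 / 8 * (a * b * c * d * e) := by
      rw [ha_def, hb_def, hc_def, hd_def, he_def]; ring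
    rw [heq]
    nlinarith [hprod]
end

section
/- For the 5-agent, 5-item 1-0 utility matrix u' with rows u'_1 = (1,0,0,0,0), u'_2 = (1,1,0,0,0), u'_3 = (0,1,0,0,0), u'_4 = (0,1,0,0,0), u'_5 = (0,0,1,1,1), and uniform disagreement point d = (1/5, 2/5, 1/5, 1/5, 3/5), the balanced fractional assignment x* with rows x*_1 = (9/20,0,0,11/20,0), x*_2 = (11/20,1/10,0,7/20,0), x*_3 = (0,9/20,0,1/10,9/20), x*_4 = (0,9/20,0,0,11/20), x*_5 = (0,0,1,0,0) maximizes ∏_{i=1}^{5} (Σ_j u'_{ij} y_{ij} − d_i) over all balanced fractional assignments y with Σ_j u'_{ij} y_{ij} ≥ d_i for all i; moreover, in x*, agent 1 envies agent 2: Σ_j u'_{1j} x*_{2j} = 11/20 > 9/20 = Σ_j u'_{1j} x*_{1j}. -/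
open Finset

lemma nb_key (A B C E F : ℝ) (hA : 0 ≤ A) (hB : 0 ≤ B) (hC : 0 ≤ C) (hE : 0 ≤ E)
    (hF : 0 ≤ F) (hsum : A + B + C + E ≤ 1) (hF2 : F ≤ 2/5) :
    A * B * C * E * F ≤ 1/640 := by
  have hAB : A * B ≤ (A + B)^2 / 4 := by nlinarith [sq_nonneg (A - B)]
  have hCE : C * E ≤ (C + E)^2 / 4 := by nlinarith [sq_nonneg (C - E)]
  have hst : (A + B) * (C + E) ≤ 1/4 := by nlinarith [sq_nonneg (A + B - (C + E))]
  have hP : A * B * C * E ≤ 1/256 := by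
    rw [mul_assoc (A*B)]
    calc A * B * (C * E) ≤ (A+B)^2/4 * ((C+E)^2/4) := by
          apply mul_le_mul hAB hCE (by positivity) (by positivity)
      _ = ((A+B)*(C+E))^2/16 := by ring
      _ ≤ (1/4)^2/16 := by
          have h0 : 0 ≤ (A+B)*(C+E) := by positivity
          nlinarith
      _ = 1/256 := by norm_num
  have h0 : 0 ≤ A * B * C * E := by positivity
  nlinarith

set_option maxHeartbeats 1600000 in
/-- For the given 5×5 1-0 utility matrix `u'`, uniform disagreement
point `d`, and balanced fractional assignment `x*`: `x*` maximizes the Nash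
bargaining objective among balanced fractional assignments meeting the
disagreement point, and in `x*` agent 1 envies agent 2. -/
theorem nb_example_maximizer_and_envy :
    let u' : Fin 5 → Fin 5 → ℝ :=
      ![![1, 0, 0, 0, 0],
        ![1, 1, 0, 0, 0],
        ![0, 1, 0, 0, 0],
        ![0, 1, 0, 0, 0],
        ![0, 0, 1, 1, 1]]
    let d : Fin 5 → ℝ := ![1/5, 2/5, 1/5, 1/5, 3/5]
    let xs : Fin 5 → Fin 5 → ℝ :=
      ![![9/20, 0, 0, 11/20, 0],
        ![11/20, 1/10, 0, 7/20, 0],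
        ![0, 9/20, 0, 1/10, 9/20],
        ![0, 9/20, 0, 0, 11/20],
        ![0, 0, 1, 0, 0]]
    (IsFracAssign 5 xs ∧ IsBalanced 5 xs ∧ (∀ i, d i ≤ util 5 u' i (xs i)) ∧
      ∀ y, IsFracAssign 5 y → IsBalanced 5 y → (∀ i, d i ≤ util 5 u' i (y i)) →
        ∏ i, (util 5 u' i (y i) - d i) ≤ ∏ i, (util 5 u' i (xs i) - d i)) ∧
    (util 5 u' 0 (xs 1) = 11/20 ∧ util 5 u' 0 (xs 0) = 9/20 ∧
      util 5 u' 0 (xs 0) < util 5 u' 0 (xs 1)) := by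
  intro u' d xs
  refine ⟨⟨?_, ?_, ?_, ?_⟩, ?_, ?_, ?_⟩
  · constructor
    · intro i j
      fin_cases i <;> fin_cases j <;> simp only [u', xs] <;> norm_num [Matrix.vecHead, Matrix.vecTail, Matrix.cons_val_two, Matrix.cons_val_three, Matrix.cons_val_four]
    · intro j
      fin_cases j <;> simp only [xs, Fin.sum_univ_five] <;> norm_num [Matrix.vecHead, Matrix.vecTail, Matrix.cons_val_two, Matrix.cons_val_three, Matrix.cons_val_four]
  · intro i
    fin_cases i <;> simp only [xs, Fin.sum_univ_five] <;> norm_num [Matrix.vecHead, Matrix.vecTail, Matrix.cons_val_two, Matrix.cons_val_three, Matrix.cons_val_four]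
  · intro i
    fin_cases i <;> simp only [d, u', xs, util, Fin.sum_univ_five] <;> norm_num [Matrix.vecHead, Matrix.vecTail, Matrix.cons_val_two, Matrix.cons_val_three, Matrix.cons_val_four]
  · intro y hF hBal hd
    obtain ⟨hbd, hcol⟩ := hF
    have hn : ∀ i j : Fin 5, 0 ≤ y i j := fun i j => (hbd i j).1
    have hc0 := hcol 0
    have hc1 := hcol 1
    rw [Fin.sum_univ_five] at hc0 hc1
    have hr4 := hBal 4
    rw [Fin.sum_univ_five] at hr4
    have h0 := hd 0
    have h1 := hd 1
    have h2 := hd 2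
    have h3 := hd 3
    have h4 := hd 4
    simp only [d, u', util, Fin.sum_univ_five] at h0 h1 h2 h3 h4
    norm_num [Matrix.vecHead, Matrix.vecTail, Matrix.cons_val_two, Matrix.cons_val_three, Matrix.cons_val_four] at h0 h1 h2 h3 h4
    have hrhs : ∏ i, (util 5 u' i (xs i) - d i) = 1/640 := by
      rw [Fin.prod_univ_five]
      simp only [d, u', xs, util, Fin.sum_univ_five]
      norm_num [Matrix.vecHead, Matrix.vecTail, Matrix.cons_val_two, Matrix.cons_val_three, Matrix.cons_val_four]
    have hlhs : ∏ i, (util 5 u' i (y i) - d i) =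
        (y 0 0 - 1/5) * (y 1 0 + y 1 1 - 2/5) * (y 2 1 - 1/5) * (y 3 1 - 1/5) *
          (y 4 2 + y 4 3 + y 4 4 - 3/5) := by
      rw [Fin.prod_univ_five]
      simp only [d, u', util, Fin.sum_univ_five]
      norm_num [Matrix.vecHead, Matrix.vecTail, Matrix.cons_val_two, Matrix.cons_val_three, Matrix.cons_val_four]
      try ring
    rw [hrhs, hlhs]
    exact nb_key (y 0 0 - 1/5) (y 1 0 + y 1 1 - 2/5) (y 2 1 - 1/5) (y 3 1 - 1/5)
      (y 4 2 + y 4 3 + y 4 4 - 3/5)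
      (by linarith) (by linarith) (by linarith) (by linarith) (by linarith)
      (by nlinarith [hn 2 0, hn 3 0, hn 4 0, hn 0 1, hn 4 1])
      (by nlinarith [hn 4 0, hn 4 1])
  · simp only [u', xs, util, Fin.sum_univ_five]; norm_num [Matrix.vecHead, Matrix.vecTail, Matrix.cons_val_two, Matrix.cons_val_three, Matrix.cons_val_four]
  · simp only [u', xs, util, Fin.sum_univ_five]; norm_num [Matrix.vecHead, Matrix.vecTail, Matrix.cons_val_two, Matrix.cons_val_three, Matrix.cons_val_four]
  · simp only [u', xs, util, Fin.sum_univ_five]; norm_num [Matrix.vecHead, Matrix.vecTail, Matrix.cons_val_two, Matrix.cons_val_three, Matrix.cons_val_four]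
end

section
/- Under 1-0 utilities (every u_{ij} ∈ {0,1}), a fractional assignment maximizes the Nash welfare ∏_i Σ_j u_{ij} x_{ij} over all fractional assignments if and only if it is leximin-optimal over all fractional assignments (its vector of agent utilities, sorted in nondecreasing order, is lexicographically greatest among all fractional assignments). -/
open Finset

/-- The vector `v` sorted in nondecreasing order. -/
noncomputable def sortedVec (n : ℕ) (v : Fin n → ℝ) : Fin n → ℝ :=
  v ∘ Tuple.sort v

noncomputable section
namespace MNW

variable {n : ℕ}

/-- Kronecker delta. -/
def dta (i m : Fin n) : ℝ := if m = i then 1 else 0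

lemma dta_self (i : Fin n) : dta i i = 1 := if_pos rfl

lemma dta_ne {i m : Fin n} (h : m ≠ i) : dta i m = 0 := if_neg h

lemma sum_dta (p : Fin n) : ∑ m, dta p m = 1 := by
  simp [dta]

/-- A feasible utility vector. -/
def Feas (n : ℕ) (u : Fin n → Fin n → ℝ) (v : Fin n → ℝ) : Prop :=
  ∃ z, IsFracAssign n z ∧ ∀ m, util n u m (z m) = v m

lemma mkFA (z : Fin n → Fin n → ℝ) (h0 : ∀ a l, 0 ≤ z a l)
    (h1 : ∀ l, ∑ a, z a l = 1) : IsFracAssign n z := by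
  refine ⟨fun a l => ⟨h0 a l, ?_⟩, h1⟩
  have := Finset.single_le_sum (f := fun b => z b l) (fun b _ => h0 b l) (Finset.mem_univ a)
  simpa [h1 l] using this

lemma util_nonneg (u : Fin n → Fin n → ℝ) (hbin : ∀ i j, u i j = 0 ∨ u i j = 1)
    (m : Fin n) (y : Fin n → ℝ) (hy : ∀ l, 0 ≤ y l) : 0 ≤ util n u m y := by
  refine Finset.sum_nonneg fun l _ => mul_nonneg ?_ (hy l)
  rcases hbin m l with h | h <;> simp [h]

lemma util_combo (u : Fin n → Fin n → ℝ) (m : Fin n) (θ : ℝ) (y z : Fin n → ℝ) :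
    util n u m (fun l => y l + θ * (z l - y l)) =
      util n u m y + θ * (util n u m z - util n u m y) := by
  unfold util
  rw [mul_sub, Finset.mul_sum, Finset.mul_sum, ← Finset.sum_sub_distrib, ← Finset.sum_add_distrib]
  exact Finset.sum_congr rfl fun l _ => by ring

lemma util_add_delta (u : Fin n → Fin n → ℝ) (m : Fin n) (c : ℝ) (j : Fin n)
    (y : Fin n → ℝ) :
    util n u m (fun l => y l + c * dta j l) = util n u m y + c * u m j := by
  unfold util
  have h1 : ∑ l, u m l * (y l + c * dta j l) = ∑ l, (u m l * y l + c * dta j l * u m l) :=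
    Finset.sum_congr rfl fun l _ => by ring
  have h2 : ∑ l, c * dta j l * u m l = c * u m j := by
    rw [Finset.sum_eq_single j]
    · simp [dta]
    · intro b _ hb; simp [dta_ne hb]
    · simp
  simp only [h1, Finset.sum_add_distrib, h2]


/-- Invariant: we can route `ε` of utility from agent `b` to agent `i`,
preserving positivity of entries. -/
def Good (u x : Fin n → Fin n → ℝ) (v : Fin n → ℝ) (i b : Fin n) : Prop :=
  ∃ ε : ℝ, 0 < ε ∧ ∃ z : Fin n → Fin n → ℝ,
    (∀ a l, 0 ≤ z a l) ∧ (∀ l, ∑ a, z a l = 1) ∧ (∀ a l, 0 < x a l → 0 < z a l) ∧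
    (∀ m, util n u m (z m) = v m + ε * (dta i m - dta b m))

lemma good_step {u x : Fin n → Fin n → ℝ} {v : Fin n → ℝ}
    (hx : IsFracAssign n x) (hv : ∀ m, util n u m (x m) = v m) {i p q j : Fin n}
    (hg : Good u x v i p) (hpj : u p j = 1) (hq : 0 < x q j) :
    ∃ δ : ℝ, 0 < δ ∧ ∃ z' : Fin n → Fin n → ℝ,
      (∀ a l, 0 ≤ z' a l) ∧ (∀ l, ∑ a, z' a l = 1) ∧ (∀ a l, 0 < x a l → 0 < z' a l) ∧
      (∀ m, util n u m (z' m) = v m + δ * (dta i m - u q j * dta q m)) := by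
  obtain ⟨ε, hε, z, hz0, hz1, hzp, hzu⟩ := hg
  have hzq : 0 < z q j := hzp q j hq
  set δ : ℝ := min ε (min (x q j) (z q j)) / 2 with hδdef
  have hδ : 0 < δ := by
    have := lt_min hε (lt_min hq hzq)
    positivity
  have h2δε : 2 * δ ≤ ε := by
    have h := min_le_left ε (min (x q j) (z q j)); rw [hδdef]; linarith
  have h2δx : 2 * δ ≤ x q j := by
    have h := min_le_right ε (min (x q j) (z q j))
    have h2 := min_le_left (x q j) (z q j); rw [hδdef]; linarith
  have h2δz : 2 * δ ≤ z q j := by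
    have h := min_le_right ε (min (x q j) (z q j))
    have h2 := min_le_right (x q j) (z q j); rw [hδdef]; linarith
  set θ : ℝ := δ / ε with hθdef
  have hθ0 : 0 ≤ θ := by positivity
  have hθ1 : θ ≤ 1 := by rw [hθdef, div_le_one hε]; linarith
  have hθε : θ * ε = δ := by rw [hθdef]; field_simp
  set s : Fin n → Fin n → ℝ := fun m l => x m l + θ * (z m l - x m l) with hsdef
  have hs0 : ∀ m l, 0 ≤ s m l := by
    intro m l; have h1 := (hx.1 m l).1; have h2 := hz0 m l
    simp only [hsdef]; nlinarith
  have hsq : 2 * δ ≤ s q j := by simp only [hsdef]; nlinarith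
  have hspos : ∀ m l, 0 < x m l → 0 < s m l := by
    intro m l h; have h2 := hzp m l h; simp only [hsdef]; nlinarith
  have hscol : ∀ l, ∑ m, s m l = 1 := by
    intro l
    calc ∑ m, s m l = ∑ m, ((1 - θ) * x m l + θ * z m l) :=
          Finset.sum_congr rfl fun m _ => by simp only [hsdef]; ring
      _ = (1 - θ) * (∑ m, x m l) + θ * ∑ m, z m l := by
          rw [Finset.sum_add_distrib, Finset.mul_sum, Finset.mul_sum]
      _ = 1 := by rw [hx.2 l, hz1 l]; ring
  have hzcase : ∀ m l, 0 ≤ s m l + (δ * dta p m - δ * dta q m) * dta j l ∧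
      (0 < s m l → 0 < s m l + (δ * dta p m - δ * dta q m) * dta j l) := by
    intro m l
    unfold dta
    by_cases hl : l = j
    · rw [if_pos hl]
      by_cases hmq : m = q
      · rw [if_pos hmq]
        have hsml : s m l = s q j := by rw [hmq, hl]
        by_cases hmp : m = p
        · rw [if_pos hmp]
          exact ⟨by nlinarith [hs0 m l], fun h => by nlinarith⟩
        · rw [if_neg hmp]
          exact ⟨by nlinarith [hsq], fun _ => by nlinarith [hsq]⟩
      · rw [if_neg hmq]
        have e1 : (0:ℝ) ≤ if m = p then (1:ℝ) else 0 := by split <;> norm_num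
        constructor
        · nlinarith [hs0 m l, mul_nonneg hδ.le e1]
        · intro h; nlinarith [mul_nonneg hδ.le e1]
    · rw [if_neg hl]
      exact ⟨by nlinarith [hs0 m l], fun h => by nlinarith⟩
  set z' : Fin n → Fin n → ℝ :=
    fun m l => s m l + (δ * dta p m - δ * dta q m) * dta j l with hz'def
  refine ⟨δ, hδ, z', ?_, ?_, ?_, ?_⟩
  · intro m l
    exact (hzcase m l).1
  · -- column sums
    intro l
    have expand : ∑ m, z' m l =
        ∑ m, s m l + (∑ m, (δ * dta p m - δ * dta q m)) * dta j l := by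
      simp only [hz'def]
      rw [Finset.sum_add_distrib, ← Finset.sum_mul]
    rw [expand, hscol l]
    have hzero : ∑ m, (δ * dta p m - δ * dta q m) = 0 := by
      rw [Finset.sum_sub_distrib, ← Finset.mul_sum, ← Finset.mul_sum, sum_dta, sum_dta]
      ring
    rw [hzero]; ring
  · -- positivity preservation
    intro m l hpos
    exact (hzcase m l).2 (hspos m l hpos)
  · -- utility
    intro m
    have e0 : z' m = fun l => s m l + (δ * dta p m - δ * dta q m) * dta j l := rfl
    rw [e0, util_add_delta]
    have es : s m = fun l => x m l + θ * (z m l - x m l) := rfl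
    have e1 : util n u m (s m) = v m + δ * (dta i m - dta p m) := by
      rw [es, util_combo, hzu m, hv m, ← hθε]; ring
    rw [e1]
    have e2 : dta p m * u m j = dta p m := by
      by_cases h : m = p
      · subst h; rw [dta_self, hpj]; norm_num
      · rw [dta_ne h]; ring
    have e3 : dta q m * u m j = u q j * dta q m := by
      by_cases h : m = q
      · subst h; ring
      · rw [dta_ne h]; ring
    linear_combination δ * e2 - δ * e3

/-- One augmenting step of reachability. -/
def Step (u x : Fin n → Fin n → ℝ) (a b : Fin n) : Prop :=
  ∃ j, u a j = 1 ∧ 0 < x b j ∧ u b j = 1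

lemma good_of_reach {u x : Fin n → Fin n → ℝ} {v : Fin n → ℝ}
    (hx : IsFracAssign n x) (hv : ∀ m, util n u m (x m) = v m) {i b : Fin n}
    (h : Relation.ReflTransGen (Step u x) i b) : Good u x v i b := by
  induction h with
  | refl =>
      exact ⟨1, one_pos, x, fun a l => (hx.1 a l).1, hx.2, fun a l h => h,
        fun m => by rw [hv m]; ring⟩
  | tail hab hstep ih =>
      obtain ⟨j, hpj, hq, hqj⟩ := hstep
      obtain ⟨δ, hδ, z', h0, h1, hp, hu⟩ := good_step hx hv ih hpj hq
      exact ⟨δ, hδ, z', h0, h1, hp, fun m => by rw [hu m, hqj]; ring⟩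
lemma exchange {u x y : Fin n → Fin n → ℝ}
    (hbin : ∀ i j, u i j = 0 ∨ u i j = 1)
    (hx : IsFracAssign n x) (hy : IsFracAssign n y) {i : Fin n}
    (hlt : util n u i (x i) < util n u i (y i)) :
    (∃ ε : ℝ, 0 < ε ∧
        Feas n u (fun m => util n u m (x m) + ε * dta i m)) ∨
    (∃ k, util n u k (y k) < util n u k (x k) ∧ ∃ ε : ℝ, 0 < ε ∧
        Feas n u (fun m => util n u m (x m) + ε * (dta i m - dta k m))) := by
  classical
  set v : Fin n → ℝ := fun m => util n u m (x m) with hvdef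
  have hv : ∀ m, util n u m (x m) = v m := fun m => rfl
  by_cases hA : ∃ a, Relation.ReflTransGen (Step u x) i a ∧
      ∃ j q, u a j = 1 ∧ 0 < x q j ∧ u q j = 0
  · left
    obtain ⟨a, ha, j, q, haj, hqx, hq0⟩ := hA
    obtain ⟨δ, hδ, z', h0, h1, _, hu⟩ :=
      good_step hx hv (good_of_reach hx hv ha) haj hqx
    exact ⟨δ, hδ, z', mkFA z' h0 h1, fun m => by rw [hu m, hq0]; ring⟩
  by_cases hB : ∃ k, Relation.ReflTransGen (Step u x) i k ∧
      util n u k (y k) < util n u k (x k)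
  · right
    obtain ⟨k, hk, hky⟩ := hB
    obtain ⟨ε, hε, z, h0, h1, _, hu⟩ := good_of_reach hx hv hk
    exact ⟨k, hky, ε, hε, z, mkFA z h0 h1, fun m => hu m⟩
  exfalso
  push_neg at hA hB
  set Rf : Finset (Fin n) :=
    Finset.univ.filter (fun a => Relation.ReflTransGen (Step u x) i a) with hRfdef
  set N : Finset (Fin n) := Finset.univ.filter (fun j => ∃ a ∈ Rf, u a j = 1) with hNdef
  have hiRf : i ∈ Rf := by
    rw [hRfdef]; simp [Relation.ReflTransGen.refl]
  have key : ∀ j ∈ N, ∀ b, 0 < x b j → u b j = 1 ∧ b ∈ Rf := by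
    intro j hj b hb
    rw [hNdef] at hj
    obtain ⟨a, haRf, haj⟩ := (Finset.mem_filter.1 hj).2
    have hreach : Relation.ReflTransGen (Step u x) i a := by
      rw [hRfdef] at haRf; exact (Finset.mem_filter.1 haRf).2
    have hu1 : u b j = 1 := by
      rcases hbin b j with h0 | h1
      · exact absurd h0 (hA a hreach j b haj hb)
      · exact h1
    refine ⟨hu1, ?_⟩
    rw [hRfdef]
    simp only [Finset.mem_filter, Finset.mem_univ, true_and]
    exact hreach.tail ⟨j, haj, hb, hu1⟩
  -- (1)  card N ≤ ∑_{k ∈ Rf} v k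
  have inner : ∀ j ∈ N, ∑ k ∈ Rf, u k j * x k j = 1 := by
    intro j hj
    have h1 : ∑ k ∈ Rf, u k j * x k j = ∑ k, u k j * x k j := by
      refine Finset.sum_subset (Finset.subset_univ _) ?_
      intro k _ hk
      have hx0 : x k j = 0 := by
        rcases (hx.1 k j).1.eq_or_lt with h | h
        · exact h.symm
        · exact absurd ((key j hj k h).2) hk
      rw [hx0, mul_zero]
    rw [h1]
    have h2 : ∑ k, u k j * x k j = ∑ k, x k j := by
      refine Finset.sum_congr rfl fun k _ => ?_
      rcases (hx.1 k j).1.eq_or_lt with h | h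
      · rw [← h, mul_zero]
      · rw [(key j hj k h).1, one_mul]
    rw [h2, hx.2 j]
  have hcard1 : (N.card : ℝ) ≤ ∑ k ∈ Rf, v k := by
    have step1 : ∀ k ∈ Rf, ∑ j ∈ N, u k j * x k j ≤ v k := by
      intro k _
      rw [hvdef]
      refine Finset.sum_le_sum_of_subset_of_nonneg (Finset.subset_univ _) ?_
      intro j _ _
      refine mul_nonneg ?_ (hx.1 k j).1
      rcases hbin k j with h | h <;> simp [h]
    calc (N.card : ℝ) = ∑ j ∈ N, (1:ℝ) := by simp
      _ = ∑ j ∈ N, ∑ k ∈ Rf, u k j * x k j :=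
          Finset.sum_congr rfl fun j hj => (inner j hj).symm
      _ = ∑ k ∈ Rf, ∑ j ∈ N, u k j * x k j := Finset.sum_comm
      _ ≤ ∑ k ∈ Rf, v k := Finset.sum_le_sum step1
  -- (2)  ∑_{k ∈ Rf} util k (y k) ≤ card N
  have hcard2 : ∑ k ∈ Rf, util n u k (y k) ≤ (N.card : ℝ) := by
    have step1 : ∀ k ∈ Rf, util n u k (y k) ≤ ∑ j ∈ N, y k j := by
      intro k hk
      unfold util
      have h1 : ∀ j : Fin n, u k j * y k j ≤ if j ∈ N then y k j else 0 := by
        intro j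
        by_cases hj : j ∈ N
        · rw [if_pos hj]
          rcases hbin k j with h | h
          · rw [h, zero_mul]; exact (hy.1 k j).1
          · rw [h, one_mul]
        · rw [if_neg hj]
          have h0 : u k j = 0 := by
            rcases hbin k j with h | h
            · exact h
            · exfalso; apply hj; rw [hNdef]
              simp only [Finset.mem_filter, Finset.mem_univ, true_and]
              exact ⟨k, hk, h⟩
          rw [h0, zero_mul]
      calc ∑ j, u k j * y k j ≤ ∑ j, if j ∈ N then y k j else 0 :=
            Finset.sum_le_sum fun j _ => h1 j
        _ = ∑ j ∈ N, y k j := by rw [Finset.sum_ite_mem, Finset.univ_inter]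
    calc ∑ k ∈ Rf, util n u k (y k) ≤ ∑ k ∈ Rf, ∑ j ∈ N, y k j :=
          Finset.sum_le_sum step1
      _ = ∑ j ∈ N, ∑ k ∈ Rf, y k j := Finset.sum_comm
      _ ≤ ∑ j ∈ N, ∑ k, y k j := by
          refine Finset.sum_le_sum fun j _ => ?_
          exact Finset.sum_le_sum_of_subset_of_nonneg (Finset.subset_univ _)
            fun k _ _ => (hy.1 k j).1
      _ = ∑ j ∈ N, (1:ℝ) := Finset.sum_congr rfl fun j _ => hy.2 j
      _ = (N.card : ℝ) := by simp
  -- (3) strict inequality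
  have hstrict : ∑ k ∈ Rf, v k < ∑ k ∈ Rf, util n u k (y k) := by
    refine Finset.sum_lt_sum ?_ ⟨i, hiRf, hlt⟩
    intro k hk
    have hreach : Relation.ReflTransGen (Step u x) i k := by
      rw [hRfdef] at hk; exact (Finset.mem_filter.1 hk).2
    exact hB k hreach
  linarith

lemma feas_shrink {u : Fin n → Fin n → ℝ} {v d : Fin n → ℝ}
    (hv : Feas n u v) (hw : Feas n u (fun m => v m + d m)) {θ : ℝ}
    (hθ0 : 0 ≤ θ) (hθ1 : θ ≤ 1) : Feas n u (fun m => v m + θ * d m) := by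
  obtain ⟨z, hz, hzu⟩ := hv
  obtain ⟨z', hz', hz'u⟩ := hw
  refine ⟨fun m l => z m l + θ * (z' m l - z m l), mkFA _ ?_ ?_, ?_⟩
  · intro a l
    have h1 := (hz.1 a l).1; have h2 := (hz'.1 a l).1
    nlinarith
  · intro l
    calc ∑ a, (z a l + θ * (z' a l - z a l))
        = ∑ a, ((1 - θ) * z a l + θ * z' a l) :=
          Finset.sum_congr rfl fun a _ => by ring
      _ = (1 - θ) * (∑ a, z a l) + θ * ∑ a, z' a l := by
          rw [Finset.sum_add_distrib, Finset.mul_sum, Finset.mul_sum]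
      _ = 1 := by rw [hz.2 l, hz'.2 l]; ring
  · intro m
    have : (fun l => z m l + θ * (z' m l - z m l)) =
        fun l => z m l + θ * (z' m l - z m l) := rfl
    rw [show ((fun m l => z m l + θ * (z' m l - z m l)) m) =
        (fun l => z m l + θ * (z' m l - z m l)) from rfl, util_combo, hzu m, hz'u m]
    ring

lemma prod_bump_lt {v : Fin n → ℝ} (hpos : ∀ m, 0 < v m) (i : Fin n) {ε : ℝ}
    (hε : 0 < ε) : ∏ m, v m < ∏ m, (v m + ε * dta i m) := by
  refine Finset.prod_lt_prod (fun m _ => hpos m) (fun m _ => ?_) ⟨i, Finset.mem_univ i, ?_⟩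
  · have : (0:ℝ) ≤ dta i m := by unfold dta; split <;> norm_num
    nlinarith
  · rw [dta_self]; linarith

lemma prod_transfer_lt {v : Fin n → ℝ} (hpos : ∀ m, 0 < v m) {i k : Fin n}
    (hik : i ≠ k) {ε : ℝ} (hε : 0 < ε) (hlt : v i + ε < v k) :
    ∏ m, v m < ∏ m, (v m + ε * (dta i m - dta k m)) := by
  classical
  set f : Fin n → ℝ := fun m => v m + ε * (dta i m - dta k m) with hfdef
  have hk : k ∈ Finset.univ.erase i := Finset.mem_erase.2 ⟨(Ne.symm hik), Finset.mem_univ k⟩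
  have hrest : ∏ m ∈ (Finset.univ.erase i).erase k, f m =
      ∏ m ∈ (Finset.univ.erase i).erase k, v m := by
    refine Finset.prod_congr rfl fun m hm => ?_
    have h1 := Finset.ne_of_mem_erase hm
    have h2 := Finset.ne_of_mem_erase (Finset.mem_of_mem_erase hm)
    simp only [hfdef, dta_ne h2, dta_ne h1]
    ring
  have hfi : f i = v i + ε := by
    simp only [hfdef, dta_self, dta_ne hik]; ring
  have hfk : f k = v k - ε := by
    simp only [hfdef, dta_self, dta_ne (Ne.symm hik)]; ring
  have hP : 0 < ∏ m ∈ (Finset.univ.erase i).erase k, v m :=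
    Finset.prod_pos fun m _ => hpos m
  have ef : ∏ m, f m = (v i + ε) * ((v k - ε) * ∏ m ∈ (Finset.univ.erase i).erase k, v m) := by
    rw [← Finset.mul_prod_erase Finset.univ f (Finset.mem_univ i),
      ← Finset.mul_prod_erase (Finset.univ.erase i) f hk, hrest, hfi, hfk]
  have ev : ∏ m, v m = v i * (v k * ∏ m ∈ (Finset.univ.erase i).erase k, v m) := by
    rw [← Finset.mul_prod_erase Finset.univ v (Finset.mem_univ i),
      ← Finset.mul_prod_erase (Finset.univ.erase i) v hk]
  rw [ef, ev]
  have h1 : v i * v k < (v i + ε) * (v k - ε) := by nlinarith [hpos i, hpos k]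
  nlinarith [hP, hpos i, hpos k]

lemma lex_of_trunc {v w : Fin n → ℝ} (hv : ∀ m, 0 ≤ v m)
    (h : ∀ t : ℝ, 0 < t → ∑ m, min (w m) t ≤ ∑ m, min (v m) t) :
    toLex (w ∘ Tuple.sort w) ≤ toLex (v ∘ Tuple.sort v) := by
  by_contra hcon
  have tri := (@Pi.isTrichotomous_lex (Fin n) (fun _ => ℝ) (· < ·) (fun {_} => (· < ·))
    (fun _ => inferInstance) wellFounded_lt).trichotomous
  have hcon2 : toLex (v ∘ Tuple.sort v) < toLex (w ∘ Tuple.sort w) := by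
    by_cases h1 : toLex (w ∘ Tuple.sort w) < toLex (v ∘ Tuple.sort v)
    · exact absurd h1.le hcon
    by_cases h2 : toLex (v ∘ Tuple.sort v) < toLex (w ∘ Tuple.sort w)
    · exact h2
    exact absurd (le_of_eq (congrArg toLex (tri _ _ h1 h2))) hcon
  obtain ⟨m, hpre, hm⟩ := hcon2
  simp only [Pi.toLex_apply] at hpre hm
  set sv : Fin n → ℝ := v ∘ Tuple.sort v with hsv
  set sw : Fin n → ℝ := w ∘ Tuple.sort w with hsw
  set t : ℝ := sw m with htdef
  have ht : 0 < t := lt_of_le_of_lt (hv _) hm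
  have hlt2 : ∑ s, min (sv s) t < ∑ s, min (sw s) t := by
    refine Finset.sum_lt_sum (fun s _ => ?_) ⟨m, Finset.mem_univ m, ?_⟩
    · rcases lt_trichotomy s m with hs | hs | hs
      · rw [hpre s hs]
      · subst hs
        exact min_le_min (le_of_lt hm) le_rfl
      · have hmono : sw m ≤ sw s := Tuple.monotone_sort w (le_of_lt hs)
        rw [min_eq_right hmono]
        exact min_le_right _ _
    · rw [min_eq_left (le_of_lt hm), min_self]
      exact hm
  have e1 : ∑ s, min (sv s) t = ∑ a, min (v a) t :=
    Equiv.sum_comp (Tuple.sort v) (fun a => min (v a) t)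
  have e2 : ∑ s, min (sw s) t = ∑ a, min (w a) t :=
    Equiv.sum_comp (Tuple.sort w) (fun a => min (w a) t)
  have hfin := h t ht
  rw [← e1, ← e2] at hfin
  clear hcon tri hpre hm
  linarith

lemma fa_isCompact : IsCompact {y : Fin n → Fin n → ℝ | IsFracAssign n y} := by
  have hcomp : IsCompact (Set.pi Set.univ
      (fun _ : Fin n => Set.pi Set.univ fun _ : Fin n => Set.Icc (0:ℝ) 1)) :=
    isCompact_univ_pi fun _ => isCompact_univ_pi fun _ => isCompact_Icc
  have hsub : {y : Fin n → Fin n → ℝ | IsFracAssign n y} ⊆ Set.pi Set.univ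
      (fun _ : Fin n => Set.pi Set.univ fun _ : Fin n => Set.Icc (0:ℝ) 1) := by
    intro y hy
    intro i _
    intro j _
    exact ⟨(hy.1 i j).1, (hy.1 i j).2⟩
  have hclosed : IsClosed {y : Fin n → Fin n → ℝ | IsFracAssign n y} := by
    have h1 : {y : Fin n → Fin n → ℝ | IsFracAssign n y} =
        (⋂ i, ⋂ j, {y : Fin n → Fin n → ℝ | y i j ∈ Set.Icc (0:ℝ) 1}) ∩
          (⋂ j, {y : Fin n → Fin n → ℝ | ∑ i, y i j = 1}) := by
      ext y
      simp only [Set.mem_setOf_eq, Set.mem_inter_iff, Set.mem_iInter, Set.mem_Icc]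
      exact ⟨fun h => ⟨fun i j => h.1 i j, fun j => h.2 j⟩,
        fun h => ⟨fun i j => h.1 i j, fun j => h.2 j⟩⟩
    rw [h1]
    refine IsClosed.inter (isClosed_iInter fun i => isClosed_iInter fun j => ?_)
      (isClosed_iInter fun j => ?_)
    · have hc : Continuous fun y : Fin n → Fin n → ℝ => y i j :=
        (continuous_apply j).comp (continuous_apply i)
      exact isClosed_Icc.preimage hc
    · refine isClosed_eq (continuous_finset_sum _ fun i _ => ?_) continuous_const
      exact show Continuous fun y : Fin n → Fin n → ℝ => y i j from
        (continuous_apply j).comp (continuous_apply i)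
  exact hcomp.of_isClosed_subset hclosed hsub

lemma cont_util (u : Fin n → Fin n → ℝ) (m : Fin n) :
    Continuous (fun y : Fin n → Fin n → ℝ => util n u m (y m)) := by
  unfold util
  refine continuous_finset_sum _ fun j _ => ?_
  exact continuous_const.mul (show Continuous fun y : Fin n → Fin n → ℝ => y m j from
    (continuous_apply j).comp (continuous_apply m))


lemma sq_helper1 (a b e : ℝ) (he : 0 < e) (hle : e ≤ b - a) :
    (a + e * (1 - 0) - b)^2 < (a - b)^2 := by nlinarith

lemma sq_helper2 (a b e : ℝ) (he : 0 < e) (hle : e ≤ a - b) :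
    (a + e * (0 - 1) - b)^2 < (a - b)^2 := by nlinarith

/-- Central lemma: a Nash-welfare maximizer maximizes every truncated sum. -/
lemma nwmax_trunc {u : Fin n → Fin n → ℝ}
    (hbin : ∀ i j, u i j = 0 ∨ u i j = 1) (hrow : ∀ i, ∃ j, 0 < u i j)
    (hn : 0 < n) {xh : Fin n → Fin n → ℝ} (hxh : IsFracAssign n xh)
    (hmax : ∀ y, IsFracAssign n y →
      ∏ m, util n u m (y m) ≤ ∏ m, util n u m (xh m))
    {t : ℝ} (ht : 0 < t) {w0 : Fin n → ℝ} (hw0 : Feas n u w0) :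
    ∑ m, min (w0 m) t ≤ ∑ m, min (util n u m (xh m)) t := by
  classical
  set v : Fin n → ℝ := fun m => util n u m (xh m) with hvdef
  -- v is strictly positive
  have hmaxv : ∀ w', Feas n u w' → ∏ m, w' m ≤ ∏ m, v m := by
    rintro w' ⟨z, hz, hzu⟩
    calc ∏ m, w' m = ∏ m, util n u m (z m) :=
          Finset.prod_congr rfl fun m _ => (hzu m).symm
      _ ≤ ∏ m, v m := hmax z hz
  have hvpos : ∀ m, 0 < v m := by
    have hx0 : IsFracAssign n (fun _ _ : Fin n => (1:ℝ)/n) := by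
      refine mkFA _ (fun a l => by positivity) (fun l => ?_)
      rw [Finset.sum_const, Finset.card_univ, Fintype.card_fin, nsmul_eq_mul]
      field_simp
    have hpos0 : ∀ m, 0 < util n u m ((fun _ _ : Fin n => (1:ℝ)/n) m) := by
      intro m
      obtain ⟨j0, hj0⟩ := hrow m
      refine Finset.sum_pos' (fun j _ => ?_) ⟨j0, Finset.mem_univ j0, ?_⟩
      · rcases hbin m j with h | h <;> simp [h] <;> positivity
      · have hu1 : u m j0 = 1 := by
          rcases hbin m j0 with h | h
          · rw [h] at hj0; exact absurd hj0 (lt_irrefl 0)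
          · exact h
        rw [hu1, one_mul]; positivity
    have hprod0 : 0 < ∏ m, util n u m ((fun _ _ : Fin n => (1:ℝ)/n) m) :=
      Finset.prod_pos fun m _ => hpos0 m
    have hge := hmax _ hx0
    intro m
    rcases (util_nonneg u hbin m (xh m) fun l => (hxh.1 m l).1).eq_or_lt with h | h
    · exfalso
      have : ∏ m, v m = 0 := Finset.prod_eq_zero (Finset.mem_univ m) h.symm
      rw [hvdef] at this
      linarith
    · exact h
  -- set up the doubly-optimized witness
  set F : (Fin n → Fin n → ℝ) → ℝ := fun y => ∑ m, min (util n u m (y m)) t with hFdef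
  have hFcont : Continuous F := by
    rw [hFdef]
    refine continuous_finset_sum _ fun m _ => ?_
    exact Continuous.min (cont_util u m) continuous_const
  obtain ⟨y₁, hy₁S, hy₁max⟩ := fa_isCompact.exists_isMaxOn ⟨xh, hxh⟩ hFcont.continuousOn
  set M : ℝ := F y₁ with hMdef
  have hMmax : ∀ y, IsFracAssign n y → F y ≤ M := fun y hy => hy₁max hy
  -- suffices: M ≤ ∑ min v t
  have hw0M : ∑ m, min (w0 m) t ≤ M := by
    obtain ⟨z, hz, hzu⟩ := hw0
    have : F z = ∑ m, min (w0 m) t := by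
      rw [hFdef]
      exact Finset.sum_congr rfl fun m _ => by rw [hzu m]
    rw [← this]
    exact hMmax z hz
  by_contra hcontra
  push_neg at hcontra
  have hMgt : ∑ m, min (v m) t < M := lt_of_lt_of_le hcontra hw0M
  -- the G-minimal F-maximal point
  set S' : Set (Fin n → Fin n → ℝ) :=
    {y | IsFracAssign n y} ∩ {y | F y = M} with hS'def
  have hS'comp : IsCompact S' :=
    fa_isCompact.inter_right (isClosed_eq hFcont continuous_const)
  have hS'ne : S'.Nonempty := ⟨y₁, hy₁S, rfl⟩
  set G : (Fin n → Fin n → ℝ) → ℝ := fun y => ∑ m, (util n u m (y m) - v m)^2 with hGdef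
  have hGcont : Continuous G :=
    continuous_finset_sum _ fun m _ => ((cont_util u m).sub continuous_const).pow 2
  obtain ⟨y, hyS', hymin⟩ := hS'comp.exists_isMinOn hS'ne hGcont.continuousOn
  have hyS : IsFracAssign n y := hyS'.1
  have hFy : F y = M := hyS'.2
  set w : Fin n → ℝ := fun m => util n u m (y m) with hwdef
  -- find a coordinate where w's truncation beats v's
  have hex : ∃ i, min (v i) t < min (w i) t := by
    by_contra hno
    push_neg at hno
    have : F y ≤ ∑ m, min (v m) t := Finset.sum_le_sum fun m _ => hno m
    rw [hFy] at this
    linarith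
  obtain ⟨i, hi⟩ := hex
  have hvit : v i < t := by
    by_contra hh
    push_neg at hh
    rw [min_eq_right hh] at hi
    exact absurd (min_le_right (w i) t) (not_le.2 hi)
  have hviw : v i < w i := by
    rw [min_eq_left hvit.le] at hi
    exact lt_of_lt_of_le hi (min_le_left _ _)
  -- first exchange: from xh towards y at i
  rcases exchange hbin hxh hyS hviw with ⟨ε, hε, hf⟩ | ⟨k, hkw, ε, hε, hf⟩
  · -- direct improvement: contradicts NW-maximality
    have hf' : Feas n u (fun m => v m + ε * dta i m) := hf
    have h1 := hmaxv _ hf'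
    have h2 := prod_bump_lt hvpos i hε
    linarith
  -- here hkw : util k (y k) < util k (xh k), i.e. w k < v k
  have hkw' : w k < v k := hkw
  -- v k ≤ v i, else a transfer improves NW
  have hvk : v k ≤ v i := by
    by_contra hgt
    push_neg at hgt
    have hik : i ≠ k := fun h => by rw [h] at hgt; exact lt_irrefl _ hgt
    set ε' : ℝ := min ε ((v k - v i)/2) with hε'def
    have hε' : 0 < ε' := lt_min hε (by linarith)
    have hθ1 : ε'/ε ≤ 1 := by
      rw [div_le_one hε]; exact min_le_left _ _
    have hf' : Feas n u (fun m => v m + ε * (dta i m - dta k m)) := hf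
    have hshr := feas_shrink (v := v) (d := fun m => ε * (dta i m - dta k m))
      ⟨xh, hxh, fun m => rfl⟩ hf' (θ := ε'/ε) (by positivity) hθ1
    have heq : (fun m => v m + ε'/ε * (ε * (dta i m - dta k m))) =
        (fun m => v m + ε' * (dta i m - dta k m)) := by
      funext m
      rw [show ε'/ε * (ε * (dta i m - dta k m)) = (ε'/ε * ε) * (dta i m - dta k m) from
        by ring, div_mul_cancel₀ _ hε.ne']
    rw [heq] at hshr
    have h1 := hmaxv _ hshr
    have h2 := prod_transfer_lt hvpos hik hε'
      (by have := min_le_right ε ((v k - v i)/2); rw [hε'def]; linarith)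
    linarith
  have hwkt : w k < t := by linarith
  -- second exchange: from y towards xh at k
  rcases exchange hbin hyS hxh hkw with ⟨ε₂, hε₂, hf₂⟩ | ⟨l, hlv, ε₂, hε₂, hf₂⟩
  · -- direct improvement of F: contradicts F-maximality
    have hf₂' : Feas n u (fun m => w m + ε₂ * dta k m) := hf₂
    obtain ⟨z₂, hz₂, hz₂u⟩ := hf₂'
    have hFz₂ : F z₂ = ∑ m, min (w m + ε₂ * dta k m) t := by
      show ∑ m, min (util n u m (z₂ m)) t = _
      exact Finset.sum_congr rfl fun m _ => by rw [hz₂u m]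
    have hFyw : F y = ∑ m, min (w m) t := rfl
    have hgt2 : M < F z₂ := by
      rw [hFz₂, ← hFy, hFyw]
      refine Finset.sum_lt_sum (fun m _ => ?_) ⟨k, Finset.mem_univ k, ?_⟩
      · by_cases hm : m = k
        · rw [hm, dta_self]
          exact min_le_min (by linarith) le_rfl
        · rw [dta_ne hm, mul_zero, add_zero]
      · rw [dta_self, mul_one, min_eq_left hwkt.le]
        exact lt_min (by linarith) hwkt
    exact absurd (hMmax z₂ hz₂) (not_le.2 hgt2)
  · -- the Pigou–Dalton style contradiction with G-minimality
    have hlv' : v l < w l := hlv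
    have hkl : k ≠ l := fun h => by rw [h] at hkw'; linarith
    set ε₃ : ℝ := min ε₂ (min (t - w k) (min (v k - w k) (w l - v l))) with hε₃def
    have hε₃ : 0 < ε₃ :=
      lt_min hε₂ (lt_min (by linarith) (lt_min (by linarith) (by linarith)))
    have hε₃a : ε₃ ≤ t - w k := le_trans (min_le_right _ _) (min_le_left _ _)
    have hε₃b : ε₃ ≤ v k - w k :=
      le_trans (min_le_right _ _) (le_trans (min_le_right _ _) (min_le_left _ _))
    have hε₃c : ε₃ ≤ w l - v l :=
      le_trans (min_le_right _ _) (le_trans (min_le_right _ _) (min_le_right _ _))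
    have hθ1 : ε₃/ε₂ ≤ 1 := by
      rw [div_le_one hε₂]; exact min_le_left _ _
    have hf₂' : Feas n u (fun m => w m + ε₂ * (dta k m - dta l m)) := hf₂
    have hshr := feas_shrink (v := w) (d := fun m => ε₂ * (dta k m - dta l m))
      ⟨y, hyS, fun m => rfl⟩ hf₂' (θ := ε₃/ε₂) (by positivity) hθ1
    have heq : (fun m => w m + ε₃/ε₂ * (ε₂ * (dta k m - dta l m))) =
        (fun m => w m + ε₃ * (dta k m - dta l m)) := by
      funext m
      rw [show ε₃/ε₂ * (ε₂ * (dta k m - dta l m)) = (ε₃/ε₂ * ε₂) * (dta k m - dta l m) from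
        by ring, div_mul_cancel₀ _ hε₂.ne']
    rw [heq] at hshr
    obtain ⟨z₃, hz₃, hz₃u⟩ := hshr
    have hFyw : F y = ∑ m, min (w m) t := rfl
    have hFz₃ : F z₃ = ∑ m, min (w m + ε₃ * (dta k m - dta l m)) t := by
      show ∑ m, min (util n u m (z₃ m)) t = _
      exact Finset.sum_congr rfl fun m _ => by rw [hz₃u m]
    -- F z₃ = M
    have hpt : ∀ m, min (w m) t + (ε₃ * dta k m - ε₃ * dta l m) ≤
        min (w m + ε₃ * (dta k m - dta l m)) t := by
      intro m
      by_cases hmk : m = k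
      · rw [hmk]
        rw [dta_self, dta_ne hkl, min_eq_left hwkt.le, mul_zero, sub_zero, mul_one]
        have : w k + ε₃ * (1 - 0) ≤ t := by linarith
        rw [show w k + ε₃ * ((1:ℝ) - 0) = w k + ε₃ from by ring] at this
        rw [show ε₃ * ((1:ℝ) - 0) = ε₃ from by ring, min_eq_left this]
      · by_cases hml : m = l
        · rw [hml] at hmk ⊢
          rw [dta_ne hmk, dta_self, mul_zero, zero_sub, mul_one]
          have h1 := min_le_left (w l) t
          have h2 := min_le_right (w l) t
          refine le_min (by linarith) (by linarith)
        · rw [dta_ne hmk, dta_ne hml]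
          rw [show w m + ε₃ * ((0:ℝ) - 0) = w m from by ring]
          rw [show ε₃ * (0:ℝ) - ε₃ * 0 = 0 from by ring, add_zero]
    have hFge : M ≤ F z₃ := by
      rw [hFz₃, ← hFy, hFyw]
      have h1 : ∑ m, (min (w m) t + (ε₃ * dta k m - ε₃ * dta l m)) ≤
          ∑ m, min (w m + ε₃ * (dta k m - dta l m)) t :=
        Finset.sum_le_sum fun m _ => hpt m
      have h2 : ∑ m, (min (w m) t + (ε₃ * dta k m - ε₃ * dta l m)) =
          ∑ m, min (w m) t + ∑ m, (ε₃ * dta k m - ε₃ * dta l m) :=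
        Finset.sum_add_distrib
      have h3 : ∑ m, (ε₃ * dta k m - ε₃ * dta l m) = 0 := by
        rw [Finset.sum_sub_distrib, ← Finset.mul_sum, ← Finset.mul_sum, sum_dta, sum_dta]
        ring
      linarith
    have hFeq : F z₃ = M := le_antisymm (hMmax z₃ hz₃) hFge
    -- G z₃ < G y
    have hGy : G y = ∑ m, (w m - v m)^2 := rfl
    have hGlt : G z₃ < G y := by
      rw [hGy]
      have hGz : G z₃ = ∑ m, (w m + ε₃ * (dta k m - dta l m) - v m)^2 := by
        show ∑ m, (util n u m (z₃ m) - v m)^2 = _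
        exact Finset.sum_congr rfl fun m _ => by rw [hz₃u m]
      rw [hGz]
      refine Finset.sum_lt_sum (fun m _ => ?_) ⟨k, Finset.mem_univ k, ?_⟩
      · by_cases hmk : m = k
        · rw [hmk, dta_self, dta_ne hkl]
          exact (sq_helper1 (w k) (v k) ε₃ hε₃ hε₃b).le
        · by_cases hml : m = l
          · rw [hml] at hmk ⊢
            rw [dta_ne hmk, dta_self]
            exact (sq_helper2 (w l) (v l) ε₃ hε₃ hε₃c).le
          · rw [dta_ne hmk, dta_ne hml]
            rw [show w m + ε₃ * ((0:ℝ) - 0) - v m = w m - v m from by ring]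
      · rw [dta_self, dta_ne hkl]
        exact sq_helper1 (w k) (v k) ε₃ hε₃ hε₃b
    exact absurd (show G y ≤ G z₃ from hymin ⟨hz₃, hFeq⟩) (not_le.2 hGlt)

end MNW
end

/-- Under 1-0 utilities, a fractional assignment maximizes Nash
welfare over all fractional assignments iff it is leximin-optimal over all
fractional assignments. -/
theorem mnw_iff_leximin_of_binary (n : ℕ) (u : Fin n → Fin n → ℝ)
    (hbin : ∀ i j, u i j = 0 ∨ u i j = 1)
    (hrow : ∀ i, ∃ j, 0 < u i j) (hcol : ∀ j, ∃ i, 0 < u i j)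
    (x : Fin n → Fin n → ℝ) (hx : IsFracAssign n x) :
    (∀ y, IsFracAssign n y → ∏ i, util n u i (y i) ≤ ∏ i, util n u i (x i)) ↔
    (∀ y, IsFracAssign n y →
      toLex (sortedVec n (fun i => util n u i (y i))) ≤
        toLex (sortedVec n (fun i => util n u i (x i)))) := by
  rcases Nat.eq_zero_or_pos n with hn | hn
  · subst hn
    constructor
    · intro _ y _
      have he : sortedVec 0 (fun i => util 0 u i (y i)) =
          sortedVec 0 (fun i => util 0 u i (x i)) := by
        funext i; exact i.elim0
      exact le_of_eq (congrArg toLex he)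
    · intro _ y _
      simp [Finset.univ_eq_empty]
  · have hcont : Continuous fun z : Fin n → Fin n → ℝ => ∏ m, util n u m (z m) :=
      continuous_finset_prod _ fun m _ => MNW.cont_util u m
    constructor
    · intro hmax y hy
      exact MNW.lex_of_trunc
        (fun m => MNW.util_nonneg u hbin m (x m) (fun l => (hx.1 m l).1))
        (fun t ht => MNW.nwmax_trunc hbin hrow hn hx hmax ht ⟨y, hy, fun m => rfl⟩)
    · intro hlex y hy
      obtain ⟨x', hx'S, hx'max⟩ :=
        MNW.fa_isCompact.exists_isMaxOn ⟨x, hx⟩ hcont.continuousOn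
      have hx'fa : IsFracAssign n x' := hx'S
      have hmax' : ∀ z, IsFracAssign n z →
          ∏ m, util n u m (z m) ≤ ∏ m, util n u m (x' m) := fun z hz => hx'max hz
      have hlex' : ∀ z, IsFracAssign n z →
          toLex (sortedVec n (fun m => util n u m (z m))) ≤
            toLex (sortedVec n (fun m => util n u m (x' m))) := fun z hz =>
        MNW.lex_of_trunc
          (fun m => MNW.util_nonneg u hbin m (x' m) (fun l => (hx'fa.1 m l).1))
          (fun t ht => MNW.nwmax_trunc hbin hrow hn hx'fa hmax' ht ⟨z, hz, fun m => rfl⟩)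
      have h1 := hlex x' hx'fa
      have h2 := hlex' x hx
      have heq : sortedVec n (fun m => util n u m (x m)) =
          sortedVec n (fun m => util n u m (x' m)) :=
        congrArg ofLex (le_antisymm h2 h1)
      have e1 : ∏ m, util n u m (x' m) =
          ∏ s, (sortedVec n (fun m => util n u m (x' m))) s :=
        (Equiv.prod_comp (Tuple.sort (fun m => util n u m (x' m)))
          (fun m => util n u m (x' m))).symm
      have e2 : ∏ m, util n u m (x m) =
          ∏ s, (sortedVec n (fun m => util n u m (x m))) s :=
        (Equiv.prod_comp (Tuple.sort (fun m => util n u m (x m)))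
          (fun m => util n u m (x m))).symm
      calc ∏ m, util n u m (y m) ≤ ∏ m, util n u m (x' m) := hmax' y hy
        _ = ∏ s, (sortedVec n (fun m => util n u m (x' m))) s := e1
        _ = ∏ s, (sortedVec n (fun m => util n u m (x m))) s := by rw [heq]
        _ = ∏ m, util n u m (x m) := e2.symm
end
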